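/- arXiv:1505.01188 — 15 statements merged into one kernel-verified Lean document; each statement's English description precedes it below -/
import Mathlib

section
/- Let M be a homogeneous transitive n-graph, let i be a colour and a ∈ M, and suppose that R_i(a) is an i-clique. Then for every b ∈ R_i(a) one has {a} ∪ R_i(a) = {b} ∪ R_i(b). -/
/-!
Common definitions for edge-coloured graphs ("n-graphs").
`V` is the vertex set and `C` the set of colours; `c x y` is the colour of the
pair `{x, y}` (only meaningful for `x ≠ y`).
-/

variable {V C : Type*}

/-- The colouring `c` is symmetric. -/
def CSymm (c : V → V → C) : Prop :=
  ∀ x y : V, c x y = c y x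

/-- Every colour is realised on some pair of distinct vertices. -/
def CAll (c : V → V → C) : Prop :=
  ∀ i : C, ∃ x y : V, x ≠ y ∧ c x y = i

/-- `σ` is an automorphism of the edge-coloured graph `(V, c)`. -/
def CAuto (c : V → V → C) (σ : Equiv.Perm V) : Prop :=
  ∀ x y : V, x ≠ y → c (σ x) (σ y) = c x y

/-- Homogeneity: every colour-preserving injection defined on a finite set of
vertices (equivalently, every colour-preserving bijection between two finite
subsets) extends to an automorphism. -/
def CHom (c : V → V → C) : Prop :=
  ∀ (A : Finset V) (f : V → V), Set.InjOn f (↑A : Set V) →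
    (∀ x ∈ A, ∀ y ∈ A, x ≠ y → c (f x) (f y) = c x y) →
    ∃ σ : Equiv.Perm V, CAuto c σ ∧ ∀ x ∈ A, σ x = f x

/-- The automorphism group acts transitively on the vertices. -/
def CTrans (c : V → V → C) : Prop :=
  ∀ x y : V, ∃ σ : Equiv.Perm V, CAuto c σ ∧ σ x = y

/-- Primitivity: the automorphism group acts transitively, and the only
equivalence relations invariant under all automorphisms are equality and the
total relation. -/
def CPrim (c : V → V → C) : Prop :=
  CTrans c ∧ ∀ E : V → V → Prop, Equivalence E →
    (∀ σ : Equiv.Perm V, CAuto c σ → ∀ x y, E x y → E (σ x) (σ y)) →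
    (∀ x y, E x y ↔ x = y) ∨ (∀ x y, E x y)

/-- The `i`-coloured neighbourhood `R_i(a)`. -/
def CNbhd (c : V → V → C) (i : C) (a : V) : Set V :=
  {x | x ≠ a ∧ c a x = i}

/-- `X` is a clique in colour `i`. -/
def CClique (c : V → V → C) (i : C) (X : Set V) : Prop :=
  ∀ x ∈ X, ∀ y ∈ X, x ≠ y → c x y = i

/-- There is an `i`-coloured path with `k` edges from `x` to `y`
(a sequence of pairwise distinct vertices). -/
def CPath (c : V → V → C) (i : C) (x y : V) (k : ℕ) : Prop :=
  ∃ p : Fin (k + 1) → V, Function.Injective p ∧ p 0 = x ∧ p (Fin.last k) = y ∧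
    ∀ j : Fin k, c (p j.castSucc) (p j.succ) = i

/-- in a homogeneous transitive `n`-graph, if `R_i(a)` is an
`i`-clique then `{a} ∪ R_i(a) = {b} ∪ R_i(b)` for every `b ∈ R_i(a)`. -/
theorem stmt0 {V : Type*} {n : ℕ} (hn : 2 ≤ n) (c : V → V → Fin n)
    (hsymm : CSymm c) (hall : CAll c) (htrans : CTrans c) (hhom : CHom c)
    (i : Fin n) (a : V) (hclique : CClique c i (CNbhd c i a)) :
    ∀ b ∈ CNbhd c i a, insert a (CNbhd c i a) = insert b (CNbhd c i b) := by
  -- auxiliary one-sided inclusion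
  have key : ∀ (a : V), CClique c i (CNbhd c i a) → ∀ b ∈ CNbhd c i a,
      insert a (CNbhd c i a) ⊆ insert b (CNbhd c i b) := by
    intro a hcl b hb x hx
    by_cases hxb : x = b
    · exact hxb ▸ Set.mem_insert _ _
    rcases hx with rfl | hx
    · exact Set.mem_insert_of_mem _ ⟨fun h => hb.1 h.symm, (hsymm b x).trans hb.2⟩
    · exact Set.mem_insert_of_mem _ ⟨hxb, (hsymm b x).trans (hcl x hx b hb hxb)⟩
  intro b hb
  apply Set.Subset.antisymm (key a hclique b hb)
  -- transport: get σ with σ a = b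
  obtain ⟨σ, hσ, hσa⟩ := htrans a b
  -- membership transfer
  have hmem : ∀ x : V, x ∈ CNbhd c i b ↔ σ.symm x ∈ CNbhd c i a := by
    intro x
    constructor
    · rintro ⟨hxb, hcb⟩
      have hne : σ.symm x ≠ a := fun h => hxb (by
        have := congrArg σ h; simpa [hσa] using this)
      refine ⟨hne, ?_⟩
      have := hσ a (σ.symm x) (fun h => hne h.symm)
      rw [hσa, σ.apply_symm_apply] at this
      exact this.symm.trans hcb
    · rintro ⟨hxa, hca⟩
      have hxb : x ≠ b := fun h => hxa (by simp [h, ← hσa])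
      refine ⟨hxb, ?_⟩
      have := hσ a (σ.symm x) (fun h => hxa h.symm)
      rw [hσa, σ.apply_symm_apply] at this
      exact this.trans hca
  -- R_i(b) is an i-clique
  have hclb : CClique c i (CNbhd c i b) := by
    intro x hx y hy hxy
    have hx' := (hmem x).1 hx
    have hy' := (hmem y).1 hy
    have hne : σ.symm x ≠ σ.symm y := fun h => hxy (by
      have := congrArg σ h; simpa using this)
    have := hσ (σ.symm x) (σ.symm y) hne
    rw [σ.apply_symm_apply, σ.apply_symm_apply] at this
    exact this.trans (hclique _ hx' _ hy' hne)
  have hab : a ∈ CNbhd c i b :=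
    ⟨fun h => hb.1 h.symm, (hsymm b a).trans hb.2⟩
  exact key b hclb a hab
end

section
/- Let M be a primitive homogeneous n-graph (n ≥ 2). Then for every colour i and every a ∈ M, the set R_i(a) is nonempty and is not an i-clique: there exist distinct x,y ∈ R_i(a) with c(x,y) ≠ i. -/
/-!
Common definitions for edge-coloured graphs ("n-graphs").
`V` is the vertex set and `C` the set of colours; `c x y` is the colour of the
pair `{x, y}` (only meaningful for `x ≠ y`).
-/

variable {V C : Type*}

/-- in a primitive homogeneous `n`-graph (`n ≥ 2`), every
`R_i(a)` is nonempty and is not an `i`-clique. -/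
theorem stmt1 {V : Type*} {n : ℕ} (hn : 2 ≤ n) (c : V → V → Fin n)
    (hsymm : CSymm c) (hall : CAll c) (hprim : CPrim c) (hhom : CHom c)
    (i : Fin n) (a : V) :
    (CNbhd c i a).Nonempty ∧
      ∃ x ∈ CNbhd c i a, ∃ y ∈ CNbhd c i a, x ≠ y ∧ c x y ≠ i := by
  obtain ⟨htrans, hprimE⟩ := hprim
  -- inverse of an automorphism is an automorphism
  have hinv : ∀ σ : Equiv.Perm V, CAuto c σ → CAuto c σ.symm := by
    intro σ hσ x y hxy
    have hne : σ.symm x ≠ σ.symm y := fun h => hxy (by simpa using congrArg σ h)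
    have := hσ (σ.symm x) (σ.symm y) hne
    simpa using this.symm
  -- nonemptiness of every neighbourhood
  have hne : ∀ b : V, ∀ j : Fin n, (CNbhd c j b).Nonempty := by
    intro b j
    obtain ⟨x, y, hxy, hc⟩ := hall j
    obtain ⟨σ, hσ, hσx⟩ := htrans x b
    refine ⟨σ y, fun h => hxy (σ.injective (hσx.trans h.symm)), ?_⟩
    rw [← hσx, hσ x y hxy, hc]
  refine ⟨hne a i, ?_⟩
  by_contra h
  push_neg at h
  -- then R_i(b) is an i-clique for every b
  have hcl : ∀ b x, x ≠ b → c b x = i → ∀ z, z ≠ b → c b z = i → x ≠ z → c x z = i := by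
    intro b x hx hcx z hz hcz hxz
    obtain ⟨σ, hσ, hσab⟩ := htrans b a
    have h1 : σ x ∈ CNbhd c i a := by
      refine ⟨fun hh => hx (σ.injective (hh.trans hσab.symm)), ?_⟩
      rw [← hσab, hσ b x (Ne.symm hx), hcx]
    have h2 : σ z ∈ CNbhd c i a := by
      refine ⟨fun hh => hz (σ.injective (hh.trans hσab.symm)), ?_⟩
      rw [← hσab, hσ b z (Ne.symm hz), hcz]
    have := h (σ x) h1 (σ z) h2 (fun hh => hxz (σ.injective hh))
    rwa [hσ x z hxz] at this
  -- the relation "equal or i-coloured"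
  set E : V → V → Prop := fun x y => x = y ∨ c x y = i with hE
  have hEequiv : Equivalence E := by
    constructor
    · intro x; exact Or.inl rfl
    · intro x y hxy
      rcases hxy with h' | h'
      · exact Or.inl h'.symm
      · exact Or.inr ((hsymm y x).trans h')
    · intro x y z hxy hyz
      rcases hxy with h' | h'
      · rwa [h']
      rcases hyz with h'' | h''
      · exact Or.inr (h'' ▸ h')
      by_cases hxy' : x = y
      · rw [hxy']; exact Or.inr h''
      by_cases hyz' : y = z
      · rw [← hyz']; exact Or.inr h'
      by_cases hxz : x = z
      · exact Or.inl hxz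
      · exact Or.inr (hcl y x hxy' ((hsymm y x).trans h') z (Ne.symm hyz') h'' hxz)
  have hEinv : ∀ σ : Equiv.Perm V, CAuto c σ → ∀ x y, E x y → E (σ x) (σ y) := by
    intro σ hσ x y hxy
    rcases hxy with h' | h'
    · exact Or.inl (congrArg σ h')
    by_cases hxy' : x = y
    · exact Or.inl (congrArg σ hxy')
    · exact Or.inr ((hσ x y hxy').trans h')
  rcases hprimE E hEequiv hEinv with hcase | hcase
  · obtain ⟨x, hxa, hcx⟩ := hne a i
    exact hxa ((hcase x a).mp (Or.inr ((hsymm x a).trans hcx)))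
  · have : Nontrivial (Fin n) := Fin.nontrivial_iff_two_le.mpr hn
    obtain ⟨j, hj⟩ := exists_ne i
    obtain ⟨x, y, hxy, hc⟩ := hall j
    rcases hcase x y with h' | h'
    · exact hxy h'
    · exact hj (hc ▸ h')
end

section
/- Let M be a homogeneous n-graph and i a colour. Then every connected component of the graph (M, R_i) has diameter at most n: for all x,y ∈ M, if d_i(x,y) is finite then d_i(x,y) ≤ n. -/
/-!
Common definitions for edge-coloured graphs ("n-graphs").
`V` is the vertex set and `C` the set of colours; `c x y` is the colour of the
pair `{x, y}` (only meaningful for `x ≠ y`).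
-/

variable {V C : Type*}

/-!
Take a shortest `i`-path `x = p₀, p₁, …, p_k = y`. The colours `c x p_j` (`1 ≤ j ≤ k`) are
pairwise distinct: if `c x p_a = c x p_b` with `a < b`, homogeneity gives an automorphism fixing
`x` and sending `p_a` to `p_b`, so `p_b` is within distance `a` of `x`, and going on along the
path from `p_b` reaches `y` in fewer than `k` steps. Hence `k` is at most the number of colours.
-/

namespace SimpleGraph

variable {W : Type*} {G : SimpleGraph V} {G' : SimpleGraph W} {u v : V}

lemma Reachable.dist_map_le (f : G →g G') (h : G.Reachable u v) :
    G'.dist (f u) (f v) ≤ G.dist u v := by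
  obtain ⟨w, hw⟩ := h.exists_walk_length_eq_dist
  simpa [hw] using dist_le (w.map f)

end SimpleGraph

open SimpleGraph

variable {c : V → V → C} {i : C}

/-- The graph `(M, R_i)`. `fromRel` symmetrises, so `c` need not be symmetric here. -/
def colourGraph (c : V → V → C) (i : C) : SimpleGraph V :=
  fromRel fun a b => c a b = i

lemma colourGraph_adj (hsymm : CSymm c) {a b : V} :
    (colourGraph c i).Adj a b ↔ a ≠ b ∧ c a b = i := by
  rw [colourGraph, fromRel_adj, hsymm b a, or_self]

def CAuto.toColourGraphHom {σ : Equiv.Perm V} (hσ : CAuto c σ) :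
    colourGraph c i →g colourGraph c i where
  toFun := σ
  map_rel' {a b} h := by
    obtain ⟨hab, hc⟩ := h
    refine ⟨σ.injective.ne hab, ?_⟩
    change c (σ a) (σ b) = i ∨ c (σ b) (σ a) = i
    rwa [hσ a b hab, hσ b a hab.symm]

lemma CPath.reachable {x y : V} {k : ℕ} (h : CPath c i x y k) :
    (colourGraph c i).Reachable x y := by
  obtain ⟨p, hinj, rfl, rfl, hp⟩ := h
  suffices ∀ j : Fin (k + 1), (colourGraph c i).Reachable (p 0) (p j) from this _
  refine Fin.induction .rfl fun j hj => hj.trans (Adj.reachable ?_)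
  exact ⟨hinj.ne (Fin.castSucc_lt_succ).ne, .inl (hp j)⟩

lemma SimpleGraph.Walk.IsPath.cPath (hsymm : CSymm c) {x y : V}
    {w : (colourGraph c i).Walk x y} (hw : w.IsPath) : CPath c i x y w.length := by
  refine ⟨fun j => w.getVert j, fun a b hab => ?_, w.getVert_zero, w.getVert_length, fun j => ?_⟩
  · exact Fin.ext (hw.getVert_injOn (Nat.lt_succ_iff.mp a.isLt) (Nat.lt_succ_iff.mp b.isLt) hab)
  · exact ((colourGraph_adj hsymm).mp (w.adj_getVert_succ j.isLt)).2

lemma CHom.exists_cAuto_fixing_of_colour_eq (hsymm : CSymm c) (hhom : CHom c) {x u v : V}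
    (hu : x ≠ u) (hv : x ≠ v) (h : c x u = c x v) :
    ∃ σ : Equiv.Perm V, CAuto c σ ∧ σ x = x ∧ σ u = v := by
  classical
  let f : V → V := fun z => if z = x then x else v
  have hfx : f x = x := if_pos rfl
  have hfu : f u = v := if_neg hu.symm
  have hinj : Set.InjOn f ↑({x, u} : Finset V) := by
    rw [Finset.coe_pair, Set.injOn_pair, hfx, hfu]
    exact fun h' => absurd h' hv
  have hcol : ∀ a ∈ ({x, u} : Finset V), ∀ b ∈ ({x, u} : Finset V), a ≠ b →
      c (f a) (f b) = c a b := by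
    simp only [Finset.mem_insert, Finset.mem_singleton, forall_eq_or_imp, forall_eq, hfx, hfu]
    exact ⟨⟨fun h' => absurd rfl h', fun _ => h.symm⟩,
      fun _ => by rw [hsymm v, hsymm u, h], fun h' => absurd rfl h'⟩
  obtain ⟨σ, hσ, hσf⟩ := hhom {x, u} f hinj hcol
  exact ⟨σ, hσ, by simpa [hfx] using hσf x, by simpa [hfu] using hσf u⟩

lemma colourGraph_dist_le_of_colour_eq (hsymm : CSymm c) (hhom : CHom c) {x u v : V}
    (hu : x ≠ u) (hv : x ≠ v) (h : c x u = c x v) (hr : (colourGraph c i).Reachable x u) :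
    (colourGraph c i).dist x v ≤ (colourGraph c i).dist x u := by
  obtain ⟨σ, hσ, hσx, hσu⟩ := hhom.exists_cAuto_fixing_of_colour_eq hsymm hu hv h
  simpa [CAuto.toColourGraphHom, hσx, hσu] using hr.dist_map_le hσ.toColourGraphHom

lemma injective_colour_getVert_of_length_eq_dist (hsymm : CSymm c) (hhom : CHom c) {x y : V}
    (w : (colourGraph c i).Walk x y) (hw : w.length = (colourGraph c i).dist x y) :
    Function.Injective fun j : Fin w.length => c x (w.getVert (j + 1)) := by
  refine Function.Injective.of_lt_imp_ne fun a b hab h => ?_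
  have hpath := w.isPath_of_length_eq_dist hw
  have hx : ∀ j : Fin w.length, x ≠ w.getVert (j + 1) := fun j hj => by
    have := hpath.getVert_injOn (by simp) (by simp) (w.getVert_zero.trans hj)
    omega
  have hxv : (colourGraph c i).dist x (w.getVert (b + 1)) ≤ a + 1 := by
    refine (colourGraph_dist_le_of_colour_eq hsymm hhom (hx a) (hx b) h
      (w.take (a + 1)).reachable).trans ?_
    simpa using dist_le (w.take (a + 1))
  have hvy : (colourGraph c i).dist (w.getVert (b + 1)) y ≤ w.length - (b + 1) := by
    simpa using dist_le (w.drop (b + 1))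
  have := (w.take (b + 1)).reachable.dist_triangle_left y
  omega

theorem colourGraph_dist_le_card [Fintype C] (hsymm : CSymm c) (hhom : CHom c) {x y : V}
    (h : (colourGraph c i).Reachable x y) : (colourGraph c i).dist x y ≤ Fintype.card C := by
  obtain ⟨w, hw⟩ := h.exists_walk_length_eq_dist
  simpa [hw] using Fintype.card_le_of_injective _
    (injective_colour_getVert_of_length_eq_dist hsymm hhom w hw)

theorem stmt2_general {V : Type*} {n : ℕ} (c : V → V → Fin n)
    (hsymm : CSymm c) (hhom : CHom c) (i : Fin n) :
    ∀ x y : V, (∃ k : ℕ, CPath c i x y k) →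
      ∃ k : ℕ, k ≤ n ∧ CPath c i x y k := by
  rintro x y ⟨k, hk⟩
  obtain ⟨w, hw⟩ := hk.reachable.exists_walk_length_eq_dist
  refine ⟨w.length, ?_, (w.isPath_of_length_eq_dist hw).cPath hsymm⟩
  simpa [hw] using colourGraph_dist_le_card hsymm hhom hk.reachable

/-- in a homogeneous `n`-graph, every connected component of
`(M, R_i)` has diameter at most `n`. -/
theorem stmt2 {V : Type*} {n : ℕ} (hn : 2 ≤ n) (c : V → V → Fin n)
    (hsymm : CSymm c) (hall : CAll c) (hhom : CHom c) (i : Fin n) :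
    ∀ x y : V, (∃ k : ℕ, CPath c i x y k) →
      ∃ k : ℕ, k ≤ n ∧ CPath c i x y k :=
  stmt2_general c hsymm hhom i
end

section
/- Let M be a transitive homogeneous n-graph (n ≥ 2) and i a colour such that any two vertices of M are joined by an i-path (M is R_i-connected). Suppose that for some a ∈ M the set R_i(a) is i-complete-multipartite, i.e. the relation 'x = y or c(x,y) ≠ i' is an equivalence relation on R_i(a) with at least two classes. Then the relation 'x = y or c(x,y) ≠ i' is an equivalence relation on all of M with at least two classes (M is i-complete-multipartite); in particular M is not primitive. -/
/-!
Common definitions for edge-coloured graphs ("n-graphs").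
`V` is the vertex set and `C` the set of colours; `c x y` is the colour of the
pair `{x, y}` (only meaningful for `x ≠ y`).
-/

variable {V C : Type*}

section Aux

variable {V : Type*} {n : ℕ} {c : V → V → Fin n} {i : Fin n}

/-- Transport of the neighbourhood conditions to every vertex (via transitivity). -/
lemma aux_transport (hsymm : CSymm c) (htrans : CTrans c) (a : V)
    (heqv : ∀ x ∈ CNbhd c i a, ∀ y ∈ CNbhd c i a, ∀ z ∈ CNbhd c i a,
      (x = y ∨ c x y ≠ i) → (y = z ∨ c y z ≠ i) → (x = z ∨ c x z ≠ i))
    (htwo : ∃ x ∈ CNbhd c i a, ∃ y ∈ CNbhd c i a, x ≠ y ∧ c x y = i) (v : V) :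
    (∀ x ∈ CNbhd c i v, ∀ y ∈ CNbhd c i v, ∀ z ∈ CNbhd c i v,
      (x = y ∨ c x y ≠ i) → (y = z ∨ c y z ≠ i) → (x = z ∨ c x z ≠ i)) ∧
    (∃ x ∈ CNbhd c i v, ∃ y ∈ CNbhd c i v, x ≠ y ∧ c x y = i) := by
  obtain ⟨σ, hσ, hσa⟩ := htrans a v
  -- membership transfer v → a
  have hmem : ∀ x ∈ CNbhd c i v, σ.symm x ∈ CNbhd c i a := by
    intro x hx
    obtain ⟨hxne, hcx⟩ := hx
    have h1 : σ.symm x ≠ a := by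
      intro h
      apply hxne
      rw [← hσa, ← h, Equiv.apply_symm_apply]
    refine ⟨h1, ?_⟩
    have := hσ a (σ.symm x) (fun h => h1 h.symm)
    rw [Equiv.apply_symm_apply, hσa] at this
    rw [← this]
    exact hcx
  -- colour transfer
  have hcol : ∀ x y : V, x ≠ y → c (σ.symm x) (σ.symm y) = c x y := by
    intro x y hxy
    have hne : σ.symm x ≠ σ.symm y := fun h => hxy (σ.symm.injective h)
    have := hσ (σ.symm x) (σ.symm y) hne
    rw [Equiv.apply_symm_apply, Equiv.apply_symm_apply] at this
    exact this.symm
  have hEiff : ∀ x y : V, (x = y ∨ c x y ≠ i) ↔ (σ.symm x = σ.symm y ∨ c (σ.symm x) (σ.symm y) ≠ i) := by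
    intro x y
    by_cases hxy : x = y
    · subst hxy; simp
    · constructor
      · rintro (rfl | h)
        · exact absurd rfl hxy
        · exact Or.inr (by rw [hcol x y hxy]; exact h)
      · rintro (h | h)
        · exact absurd (σ.symm.injective h) hxy
        · exact Or.inr (by rw [← hcol x y hxy]; exact h)
  constructor
  · intro x hx y hy z hz hxy hyz
    have := heqv _ (hmem x hx) _ (hmem y hy) _ (hmem z hz)
      ((hEiff x y).mp hxy) ((hEiff y z).mp hyz)
    exact (hEiff x z).mpr this
  · obtain ⟨x, hx, y, hy, hxy, hcxy⟩ := htwo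
    refine ⟨σ x, ?_, σ y, ?_, fun h => hxy (σ.injective h), ?_⟩
    · refine ⟨fun h => hx.1 (σ.injective (by rw [h, hσa])), ?_⟩
      rw [← hσa, hσ a x (fun h => hx.1 h.symm)]
      exact hx.2
    · refine ⟨fun h => hy.1 (σ.injective (by rw [h, hσa])), ?_⟩
      rw [← hσa, hσ a y (fun h => hy.1 h.symm)]
      exact hy.2
    · rw [hσ x y hxy]; exact hcxy

/-- The key combinatorial contradiction: an `i`-edge `x z`, a vertex `w`
non-adjacent (in colour `i`) to both, and a common `i`-neighbour `u` of `w`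
and `x`, is impossible. -/
lemma aux_key (hsymm : CSymm c)
    (hnb : ∀ v : V,
      (∀ x ∈ CNbhd c i v, ∀ y ∈ CNbhd c i v, ∀ z ∈ CNbhd c i v,
        (x = y ∨ c x y ≠ i) → (y = z ∨ c y z ≠ i) → (x = z ∨ c x z ≠ i)) ∧
      (∃ x ∈ CNbhd c i v, ∃ y ∈ CNbhd c i v, x ≠ y ∧ c x y = i))
    (x z w u : V)
    (hxz : c x z = i) (hxzne : x ≠ z)
    (hwx : c w x ≠ i) (hwz : c w z ≠ i) (hwxne : w ≠ x) (hwzne : w ≠ z)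
    (hux : c u x = i) (huxne : u ≠ x)
    (huw : c u w = i) (huwne : u ≠ w) : False := by
  have huzne : u ≠ z := by
    intro h
    apply hwz
    rw [hsymm w z, ← h]
    exact huw
  by_cases hcuz : c u z = i
  · -- x, w, z all in N(u); non-adjacency chain forces c x z ≠ i
    have hmx : x ∈ CNbhd c i u := ⟨fun h => huxne h.symm, hux⟩
    have hmw : w ∈ CNbhd c i u := ⟨fun h => huwne h.symm, huw⟩
    have hmz : z ∈ CNbhd c i u := ⟨fun h => huzne h.symm, hcuz⟩
    have := (hnb u).1 x hmx w hmw z hmz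
      (Or.inr (by rw [hsymm x w]; exact hwx)) (Or.inr hwz)
    rcases this with h | h
    · exact hxzne h
    · exact h hxz
  · -- find t ∈ N(x) adjacent to both u and z
    obtain ⟨heqvx, htwox⟩ := hnb x
    have hmu : u ∈ CNbhd c i x := ⟨huxne, by rw [hsymm x u]; exact hux⟩
    have hmz : z ∈ CNbhd c i x := ⟨fun h => hxzne h.symm, hxz⟩
    have hEzu : (z = u ∨ c z u ≠ i) := Or.inr (by rw [hsymm z u]; exact hcuz)
    have pick : ∀ r ∈ CNbhd c i x, ¬(r = u ∨ c r u ≠ i) →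
        (c r u = i ∧ r ≠ u ∧ c r z = i ∧ r ≠ z) := by
      intro r hr hnE
      push_neg at hnE
      have hnEz : ¬(r = z ∨ c r z ≠ i) := by
        intro hE
        exact (heqvx r hr z hmz u hmu hE hEzu).elim hnE.1 (fun h => h hnE.2)
      push_neg at hnEz
      exact ⟨hnE.2, hnE.1, hnEz.2, hnEz.1⟩
    obtain ⟨s, hs, t0, ht0, hst, hcst⟩ := htwox
    have hT : ∃ t ∈ CNbhd c i x, c t u = i ∧ t ≠ u ∧ c t z = i ∧ t ≠ z := by
      by_cases hEs : s = u ∨ c s u ≠ i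
      · by_cases hEt : t0 = u ∨ c t0 u ≠ i
        · exfalso
          have hEut : (u = t0 ∨ c u t0 ≠ i) := by
            rcases hEt with h | h
            · exact Or.inl h.symm
            · exact Or.inr (by rw [hsymm u t0]; exact h)
          have := heqvx s hs u hmu t0 ht0 hEs hEut
          rcases this with h | h
          · exact hst h
          · exact h hcst
        · exact ⟨t0, ht0, pick t0 ht0 hEt⟩
      · exact ⟨s, hs, pick s hs hEs⟩
    obtain ⟨t, htx, htu, htune, htz, htzne⟩ := hT
    -- use N(u) to show c t w = i
    have heqvu := (hnb u).1
    have hmxu : x ∈ CNbhd c i u := ⟨fun h => huxne h.symm, hux⟩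
    have hmwu : w ∈ CNbhd c i u := ⟨fun h => huwne h.symm, huw⟩
    have hmtu : t ∈ CNbhd c i u := ⟨htune, by rw [hsymm u t]; exact htu⟩
    have hnEtx : ¬(t = x ∨ c t x ≠ i) := by
      rintro (h | h)
      · exact htx.1 h
      · exact h (by rw [hsymm t x]; exact htx.2)
    have hnEtw : ¬(t = w ∨ c t w ≠ i) := by
      intro hE
      exact hnEtx (heqvu t hmtu w hmwu x hmxu hE (Or.inr hwx))
    push_neg at hnEtw
    obtain ⟨htwne, htw⟩ := hnEtw
    -- finally use N(t): u, z, w ∈ N(t), E(u,z), E(z,w) but ¬E(u,w)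
    have heqvt := (hnb t).1
    have hmut : u ∈ CNbhd c i t := ⟨fun h => htune h.symm, htu⟩
    have hmzt : z ∈ CNbhd c i t := ⟨fun h => htzne h.symm, htz⟩
    have hmwt : w ∈ CNbhd c i t := ⟨fun h => htwne h.symm, htw⟩
    have := heqvt u hmut z hmzt w hmwt (Or.inr hcuz)
      (Or.inr (by rw [hsymm z w]; exact hwz))
    rcases this with h | h
    · exact huwne h
    · exact h huw

/-- By induction along an `i`-path: no vertex can be non-`i`-adjacent to both
endpoints of an `i`-edge. -/
lemma aux_path (hsymm : CSymm c)
    (hnb : ∀ v : V,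
      (∀ x ∈ CNbhd c i v, ∀ y ∈ CNbhd c i v, ∀ z ∈ CNbhd c i v,
        (x = y ∨ c x y ≠ i) → (y = z ∨ c y z ≠ i) → (x = z ∨ c x z ≠ i)) ∧
      (∃ x ∈ CNbhd c i v, ∃ y ∈ CNbhd c i v, x ≠ y ∧ c x y = i))
    (x z : V) (hxz : c x z = i) (hxzne : x ≠ z) :
    ∀ k : ℕ, ∀ y : V, c y x ≠ i → c y z ≠ i → y ≠ x → y ≠ z →
      CPath c i y x k → False := by
  intro k
  induction k with
  | zero =>
    intro y hyx _ hynex _ hpath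
    obtain ⟨p, _, h0, hl, _⟩ := hpath
    exact hynex (by rw [← h0, ← hl]; rfl)
  | succ k ih =>
    intro y hyx hyz hynex hynez hpath
    obtain ⟨p, hinj, h0, hl, hcol⟩ := hpath
    set u := p 1 with hu
    have hyu : c y u = i := by
      have := hcol 0
      rw [Fin.castSucc_zero, Fin.succ_zero_eq_one, h0] at this
      exact this
    have huy : u ≠ y := by
      intro h
      rw [← h0] at h
      have : (1 : Fin (k + 2)) = 0 := hinj h
      simp at this
    have hunex : u ≠ x := fun h => hyx (h ▸ hyu)
    have hunez : u ≠ z := fun h => hyz (h ▸ hyu)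
    by_cases hux : c u x = i
    · exact aux_key hsymm hnb x z y u hxz hxzne hyx hyz hynex hynez hux hunex
        (by rw [hsymm u y]; exact hyu) huy
    · by_cases huz : c u z = i
      · exact aux_key hsymm hnb z x y u (by rw [hsymm z x]; exact hxz)
          (fun h => hxzne h.symm) hyz hyx hynez hynex huz hunez
          (by rw [hsymm u y]; exact hyu) huy
      · -- recurse along the tail of the path
        refine ih u hux huz hunex hunez ⟨fun j => p j.succ, ?_, ?_, ?_, ?_⟩
        · exact fun a b h => Fin.succ_injective _ (hinj h)
        · show p (Fin.succ 0) = u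
          rw [Fin.succ_zero_eq_one, hu]
        · show p (Fin.last k).succ = x
          rw [Fin.succ_last]; exact hl
        · intro j
          have := hcol j.succ
          rwa [← Fin.succ_castSucc] at this

end Aux

/-- if in a transitive homogeneous `R_i`-connected `n`-graph some
`R_i(a)` is `i`-complete-multipartite, then so is all of `M`; in particular
`M` is not primitive. -/
theorem stmt3 {V : Type*} {n : ℕ} (hn : 2 ≤ n) (c : V → V → Fin n)
    (hsymm : CSymm c) (hall : CAll c) (htrans : CTrans c) (hhom : CHom c)
    (i : Fin n)
    (hconn : ∀ x y : V, ∃ k : ℕ, CPath c i x y k)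
    (a : V)
    (heqv : ∀ x ∈ CNbhd c i a, ∀ y ∈ CNbhd c i a, ∀ z ∈ CNbhd c i a,
      (x = y ∨ c x y ≠ i) → (y = z ∨ c y z ≠ i) → (x = z ∨ c x z ≠ i))
    (htwo : ∃ x ∈ CNbhd c i a, ∃ y ∈ CNbhd c i a, x ≠ y ∧ c x y = i) :
    Equivalence (fun x y : V => x = y ∨ c x y ≠ i) ∧
      (∃ x y : V, x ≠ y ∧ c x y = i) ∧ ¬ CPrim c := by
  have hnb := fun v => aux_transport hsymm htrans a heqv htwo v
  have hEquiv : Equivalence (fun x y : V => x = y ∨ c x y ≠ i) := by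
    constructor
    · intro x; exact Or.inl rfl
    · intro x y h
      rcases h with h | h
      · exact Or.inl h.symm
      · exact Or.inr (by rw [hsymm y x]; exact h)
    · intro x y z hxy hyz
      rcases hxy with rfl | hxy
      · exact hyz
      · rcases hyz with rfl | hyz
        · exact Or.inr hxy
        · by_cases hxez : x = z
          · exact Or.inl hxez
          · by_cases hcxz : c x z = i
            · exfalso
              have hynex : y ≠ x := fun h => hyz (by rw [h]; exact hcxz)
              have hynez : y ≠ z := fun h => hxy (by rw [h]; exact hcxz)
              obtain ⟨k, hpath⟩ := hconn y x
              exact aux_path hsymm hnb x z hcxz hxez k y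
                (by rw [hsymm y x]; exact hxy) hyz hynex hynez hpath
            · exact Or.inr hcxz
  refine ⟨hEquiv, ?_, ?_⟩
  · obtain ⟨x, _, y, _, hxy, hcxy⟩ := htwo
    exact ⟨x, y, hxy, hcxy⟩
  · rintro ⟨-, hp⟩
    have hinv : ∀ σ : Equiv.Perm V, CAuto c σ → ∀ x y,
        (x = y ∨ c x y ≠ i) → (σ x = σ y ∨ c (σ x) (σ y) ≠ i) := by
      intro σ hσ x y h
      by_cases hxy : x = y
      · exact Or.inl (by rw [hxy])
      · rcases h with h | h
        · exact absurd h hxy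
        · exact Or.inr (by rw [hσ x y hxy]; exact h)
    rcases hp _ hEquiv hinv with h | h
    · -- E is not equality: there is a pair of some colour j ≠ i
      have hj : ∃ j : Fin n, j ≠ i := by
        have : Nontrivial (Fin n) := Fin.nontrivial_iff_two_le.mpr hn
        exact exists_ne i
      obtain ⟨j, hji⟩ := hj
      obtain ⟨p, q, hpq, hcpq⟩ := hall j
      have : p = q ∨ c p q ≠ i := Or.inr (by rw [hcpq]; exact hji)
      exact hpq ((h p q).mp this)
    · obtain ⟨x, _, y, _, hxy, hcxy⟩ := htwo
      rcases h x y with h' | h'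
      · exact hxy h'
      · exact h' hcxy
end

section
/- Let M be a homogeneous n-graph, a ∈ M and s a colour. Then the set R_s(a), with the colouring induced from M, is itself homogeneous: every colour-preserving bijection between two finite subsets of R_s(a) extends to a colour-preserving permutation of R_s(a). -/
/-!
Common definitions for edge-coloured graphs ("n-graphs").
`V` is the vertex set and `C` the set of colours; `c x y` is the colour of the
pair `{x, y}` (only meaningful for `x ≠ y`).
-/

variable {V C : Type*}

/-!
Extend a colour-preserving injection `f` of a finite part of `R_s(a)` by `a ↦ a`. Since every
point of `R_s(a)` has colour `s` to `a`, and `f` stays inside `R_s(a)`, the extension is still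
colour-preserving, so homogeneity of `M` gives an automorphism `σ` extending it. As `σ` fixes `a`,
it maps `R_s(a)` onto itself, and its restriction is the required automorphism of `R_s(a)`.
-/

section

variable {c : V → V → C}

theorem CAuto.subtypePerm {S : Set V} {σ : Equiv.Perm V} (hσ : CAuto c σ)
    (hS : ∀ v, σ v ∈ S ↔ v ∈ S) :
    CAuto (fun x y : S => c x.1 y.1) (σ.subtypePerm hS) :=
  fun x y hxy => hσ x y (Subtype.coe_injective.ne hxy)

theorem CAuto.apply_mem_cNbhd_iff {σ : Equiv.Perm V} (hσ : CAuto c σ) {a : V} (ha : σ a = a)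
    (i : C) (v : V) : σ v ∈ CNbhd c i a ↔ v ∈ CNbhd c i a := by
  simp only [CNbhd, Set.mem_ofPred_eq, σ.injective.ne_iff' ha]
  exact and_congr_right fun hva => by rw [← hσ a v (Ne.symm hva), ha]

noncomputable def nbhdExtend (c : V → V → C) (i : C) (a : V)
    (f : CNbhd c i a → CNbhd c i a) : V → V :=
  Function.extend Subtype.val (Subtype.val ∘ f) id

theorem nbhdExtend_coe {i : C} {a : V} (f : CNbhd c i a → CNbhd c i a) (x : CNbhd c i a) :
    nbhdExtend c i a f x = f x :=
  Subtype.val_injective.extend_apply _ _ x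

theorem nbhdExtend_self {i : C} {a : V} (f : CNbhd c i a → CNbhd c i a) :
    nbhdExtend c i a f a = a :=
  Function.extend_apply' _ _ a fun ⟨x, hx⟩ => x.2.1 hx

theorem CHom.exists_cAuto_fixing_extending (hsymm : CSymm c) (hhom : CHom c) {i : C} {a : V}
    (A : Finset (CNbhd c i a)) (f : CNbhd c i a → CNbhd c i a) (hinj : Set.InjOn f A)
    (hcol : ∀ x ∈ A, ∀ y ∈ A, x ≠ y → c (f x) (f y) = c x y) :
    ∃ σ : Equiv.Perm V, CAuto c σ ∧ σ a = a ∧ ∀ x ∈ A, σ x = f x := by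
  classical
  set B : Finset V := insert a (A.map (Function.Embedding.subtype _))
  have hB : ∀ v ∈ B, v = a ∨ ∃ x ∈ A, v = x := by
    simp only [B, Finset.mem_insert, Finset.mem_map, Function.Embedding.coe_subtype]
    rintro v (rfl | ⟨x, hx, rfl⟩)
    exacts [.inl rfl, .inr ⟨x, hx, rfl⟩]
  have hcolB : ∀ u ∈ B, ∀ v ∈ B, u ≠ v →
      c (nbhdExtend c i a f u) (nbhdExtend c i a f v) = c u v := by
    intro u hu v hv huv
    rcases hB u hu with rfl | ⟨x, hx, rfl⟩ <;> rcases hB v hv with rfl | ⟨y, hy, rfl⟩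
    · exact absurd rfl huv
    · rw [nbhdExtend_self, nbhdExtend_coe, (f y).2.2, y.2.2]
    · rw [nbhdExtend_self, nbhdExtend_coe, hsymm, (f x).2.2, hsymm, x.2.2]
    · rw [nbhdExtend_coe, nbhdExtend_coe]
      exact hcol x hx y hy (Subtype.coe_injective.ne_iff.mp huv)
  have hinjB : Set.InjOn (nbhdExtend c i a f) B := by
    intro u hu v hv huv
    rcases hB u hu with rfl | ⟨x, hx, rfl⟩ <;> rcases hB v hv with rfl | ⟨y, hy, rfl⟩
    · rfl
    · rw [nbhdExtend_self, nbhdExtend_coe] at huv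
      exact absurd huv.symm (f y).2.1
    · rw [nbhdExtend_self, nbhdExtend_coe] at huv
      exact absurd huv (f x).2.1
    · rw [nbhdExtend_coe, nbhdExtend_coe] at huv
      exact congrArg Subtype.val (hinj hx hy (Subtype.ext huv))
  obtain ⟨σ, hσ, hσg⟩ := hhom B _ hinjB hcolB
  refine ⟨σ, hσ, ?_, fun x hx => ?_⟩
  · rw [hσg a (Finset.mem_insert_self _ _), nbhdExtend_self]
  · rw [hσg x (Finset.mem_insert_of_mem (Finset.mem_map_of_mem _ hx)), nbhdExtend_coe]

end

theorem stmt4_general {V : Type*} {n : ℕ} (c : V → V → Fin n)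
    (hsymm : CSymm c) (hhom : CHom c)
    (a : V) (s : Fin n) :
    CHom (fun x y : ↥(CNbhd c s a) => c x.1 y.1) := by
  intro A f hinj hcol
  obtain ⟨σ, hσ, hσa, hσf⟩ := hhom.exists_cAuto_fixing_extending hsymm A f hinj hcol
  exact ⟨σ.subtypePerm (hσ.apply_mem_cNbhd_iff hσa s), hσ.subtypePerm _,
    fun x hx => Subtype.ext (hσf x hx)⟩

/-- in a homogeneous `n`-graph, each neighbourhood `R_s(a)` with
its induced colouring is itself homogeneous. -/
theorem stmt4 {V : Type*} {n : ℕ} (hn : 2 ≤ n) (c : V → V → Fin n)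
    (hsymm : CSymm c) (hall : CAll c) (hhom : CHom c)
    (a : V) (s : Fin n) :
    CHom (fun x y : ↥(CNbhd c s a) => c x.1 y.1) :=
  stmt4_general c hsymm hhom a s
end

section
/- Let M be a homogeneous 3-graph in which the relation 'x = y or c(x,y) = R' is an equivalence relation E, and suppose that for any two distinct E-classes C, C′ all cross-pairs (x,y) ∈ C × C′ receive one and the same colour (either all S or all T). Define a 2-colouring ĉ on the quotient M/E by letting ĉ(C,C′) be this common colour. Then (M/E, ĉ) is a homogeneous 2-coloured graph: every ĉ-preserving bijection between two finite subsets of M/E extends to a ĉ-preserving permutation of M/E. -/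
/-!
Common definitions for edge-coloured graphs ("n-graphs").
`V` is the vertex set and `C` the set of colours; `c x y` is the colour of the
pair `{x, y}` (only meaningful for `x ≠ y`).
-/

variable {V C : Type*}

/-! Definitions specific to 3-graphs, with colours `R = 0`, `S = 1`, `T = 2`. -/

/-- `x = y` or the pair `{x, y}` has colour `R` (the reflexive closure of `R`). -/
def CErel (c : V → V → Fin 3) (x y : V) : Prop :=
  x = y ∨ c x y = 0

/-- For `c a b = R`, the line `ℓ(a,b)`: the vertex `a` together with the
`R`-class of `b` inside `R(a)`. -/
def CLine (c : V → V → Fin 3) (a b : V) : Set V :=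
  insert a {x | (x ≠ a ∧ c a x = 0) ∧ (x = b ∨ c x b = 0)}

/-- A 3-graph is semilinear if its automorphism group acts transitively,
`R(a)` is infinite for every `a`, and on every `R(a)` the reflexive closure of
`R` is an equivalence relation with finitely many classes. -/
def CSemilinear (c : V → V → Fin 3) : Prop :=
  CTrans c ∧ (∀ a : V, (CNbhd c 0 a).Infinite) ∧
    (∀ a : V, ∀ x ∈ CNbhd c 0 a, ∀ y ∈ CNbhd c 0 a, ∀ z ∈ CNbhd c 0 a,
      (x = y ∨ c x y = 0) → (y = z ∨ c y z = 0) → (x = z ∨ c x z = 0)) ∧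
    (∀ a : V, ∃ F : Finset V, (↑F : Set V) ⊆ CNbhd c 0 a ∧
      ∀ x ∈ CNbhd c 0 a, ∃ v ∈ F, x = v ∨ c x v = 0)

/-- Each point is incident with exactly `m` lines: every `R`-neighbourhood has
exactly `m` `R`-classes (witnessed by a transversal of size `m`). -/
def CNumLines (c : V → V → Fin 3) (m : ℕ) : Prop :=
  ∀ a : V, ∃ F : Finset V, F.card = m ∧ (↑F : Set V) ⊆ CNbhd c 0 a ∧
    (∀ x ∈ F, ∀ y ∈ F, x ≠ y → c x y ≠ 0) ∧
    (∀ x ∈ CNbhd c 0 a, ∃ v ∈ F, x = v ∨ c x v = 0)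

/-- `x` and `y` are at `R`-distance exactly 2. -/
def CRDist2 (c : V → V → Fin 3) (x y : V) : Prop :=
  x ≠ y ∧ c x y ≠ 0 ∧ ∃ z, z ≠ x ∧ z ≠ y ∧ c x z = 0 ∧ c z y = 0

/-- `x` and `y` are at `R`-distance exactly 3. -/
def CRDist3 (c : V → V → Fin 3) (x y : V) : Prop :=
  x ≠ y ∧ c x y ≠ 0 ∧ (¬ ∃ z, z ≠ x ∧ z ≠ y ∧ c x z = 0 ∧ c z y = 0) ∧
    ∃ z w, z ≠ x ∧ z ≠ y ∧ w ≠ x ∧ w ≠ y ∧ z ≠ w ∧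
      c x z = 0 ∧ c z w = 0 ∧ c w y = 0

/-- `M` has `R`-diameter 3: for distinct vertices, colour `S` holds exactly at
`R`-distance 2 and colour `T` exactly at `R`-distance 3. -/
def CDiamR3 (c : V → V → Fin 3) : Prop :=
  ∀ x y : V, x ≠ y →
    (c x y = 1 ↔ CRDist2 c x y) ∧ (c x y = 2 ↔ CRDist3 c x y)

/-- if in a homogeneous 3-graph the reflexive closure of `R` is
an equivalence relation and the cross-pairs between any two distinct classes
are monochromatic, then the induced 2-coloured graph on the quotient is
homogeneous. -/
theorem stmt6 {V : Type*} (c : V → V → Fin 3)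
    (hsymm : CSymm c) (hall : CAll c) (hhom : CHom c)
    (s : Setoid V) (hs : ∀ x y : V, s.r x y ↔ (x = y ∨ c x y = 0))
    (chat : Quotient s → Quotient s → Fin 3)
    (hchat : ∀ x y : V, ¬ s.r x y →
      chat (Quotient.mk s x) (Quotient.mk s y) = c x y) :
    CHom chat := by
  intro A f hfinj hfcol
  classical
  -- representatives
  set A' : Finset V := A.image Quotient.out with hA'
  set g : V → V := fun v => (f (Quotient.mk s v)).out with hg
  have hmem : ∀ x ∈ A', Quotient.mk s x ∈ A ∧ (Quotient.mk s x).out = x := by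
    intro x hx
    rcases Finset.mem_image.mp hx with ⟨q, hq, rfl⟩
    have : Quotient.mk s q.out = q := Quotient.out_eq q
    rw [this]; exact ⟨hq, rfl⟩
  have hne : ∀ x ∈ A', ∀ y ∈ A', x ≠ y → ¬ s.r x y := by
    intro x hx y hy hxy hr
    have : Quotient.mk s x = Quotient.mk s y := Quotient.sound hr
    have := congrArg Quotient.out this
    rw [(hmem x hx).2, (hmem y hy).2] at this
    exact hxy this
  have hginj : Set.InjOn g (↑A' : Set V) := by
    intro x hx y hy hxy
    have hx' := hmem x hx; have hy' := hmem y hy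
    have h1 : f (Quotient.mk s x) = f (Quotient.mk s y) := by
      have := congrArg (Quotient.mk s) hxy
      simpa [hg, Quotient.out_eq] using this
    have h2 : Quotient.mk s x = Quotient.mk s y := hfinj hx'.1 hy'.1 h1
    have := congrArg Quotient.out h2
    rwa [hx'.2, hy'.2] at this
  have hgcol : ∀ x ∈ A', ∀ y ∈ A', x ≠ y → c (g x) (g y) = c x y := by
    intro x hx y hy hxy
    have hx' := hmem x hx; have hy' := hmem y hy
    have hner : ¬ s.r x y := hne x hx y hy hxy
    have hqne : Quotient.mk s x ≠ Quotient.mk s y := by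
      intro h; exact hner (Quotient.exact h)
    have hfne : f (Quotient.mk s x) ≠ f (Quotient.mk s y) := by
      intro h; exact hqne (hfinj hx'.1 hy'.1 h)
    have hgne : ¬ s.r (g x) (g y) := by
      intro h
      have : Quotient.mk s (g x) = Quotient.mk s (g y) := Quotient.sound h
      rw [hg] at this; simp only [Quotient.out_eq] at this; exact hfne this
    have h1 : chat (Quotient.mk s (g x)) (Quotient.mk s (g y)) = c (g x) (g y) :=
      hchat _ _ hgne
    have h2 : chat (Quotient.mk s x) (Quotient.mk s y) = c x y := hchat _ _ hner
    have h3 : chat (f (Quotient.mk s x)) (f (Quotient.mk s y))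
        = chat (Quotient.mk s x) (Quotient.mk s y) :=
      hfcol _ hx'.1 _ hy'.1 hqne
    rw [← h2, ← h3, ← h1, hg]
    simp only [Quotient.out_eq]
  obtain ⟨σ, hσauto, hσeq⟩ := hhom A' g hginj hgcol
  -- σ preserves the equivalence relation
  have hpres : ∀ x y : V, s.r x y → s.r (σ x) (σ y) := by
    intro x y h
    rw [hs] at h ⊢
    rcases h with rfl | h
    · exact Or.inl rfl
    · by_cases hxy : x = y
      · exact Or.inl (by rw [hxy])
      · exact Or.inr (by rw [hσauto x y hxy]; exact h)
  have hpres' : ∀ x y : V, s.r x y → s.r (σ.symm x) (σ.symm y) := by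
    intro x y h
    rw [hs] at h ⊢
    rcases h with rfl | h
    · exact Or.inl rfl
    · by_cases hxy : x = y
      · exact Or.inl (by rw [hxy])
      · refine Or.inr ?_
        have hne2 : σ.symm x ≠ σ.symm y := fun hh => hxy (σ.symm.injective hh)
        have this2 : c x y = c (σ.symm x) (σ.symm y) := by
          simpa using hσauto (σ.symm x) (σ.symm y) hne2
        rw [← this2]; exact h
  -- induced permutation of the quotient
  refine ⟨⟨Quotient.map σ hpres, Quotient.map σ.symm hpres',
      ?_, ?_⟩, ?_, ?_⟩
  · intro q; induction q using Quotient.ind with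
    | _ x => simp [Quotient.map_mk]
  · intro q; induction q using Quotient.ind with
    | _ x => simp [Quotient.map_mk]
  · -- automorphism of chat
    intro q r hqr
    induction q using Quotient.ind with
    | _ x =>
    induction r using Quotient.ind with
    | _ y =>
    have hner : ¬ s.r x y := fun h => hqr (Quotient.sound h)
    have hxy : x ≠ y := fun h => hner (by rw [hs]; exact Or.inl h)
    have hσner : ¬ s.r (σ x) (σ y) := by
      intro h
      have := hpres' (σ x) (σ y) h
      simp only [Equiv.symm_apply_apply] at this
      exact hner this
    show chat (Quotient.map σ hpres (Quotient.mk s x))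
        (Quotient.map σ hpres (Quotient.mk s y)) = _
    rw [Quotient.map_mk, Quotient.map_mk, hchat _ _ hσner, hchat _ _ hner,
      hσauto x y hxy]
  · -- agrees with f on A
    intro q hq
    induction q using Quotient.ind with
    | _ x =>
    have hx' : (Quotient.mk s x).out ∈ A' :=
      Finset.mem_image.mpr ⟨Quotient.mk s x, hq, rfl⟩
    have h1 : σ (Quotient.mk s x).out = g (Quotient.mk s x).out :=
      hσeq _ hx'
    show Quotient.map σ hpres (Quotient.mk s x) = f (Quotient.mk s x)
    have h2 : s.r x (Quotient.mk s x).out := by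
      exact Quotient.exact (Quotient.out_eq (Quotient.mk s x)).symm
    calc Quotient.map σ hpres (Quotient.mk s x)
        = Quotient.mk s (σ x) := Quotient.map_mk ..
      _ = Quotient.mk s (σ (Quotient.mk s x).out) :=
          Quotient.sound (hpres _ _ h2)
      _ = Quotient.mk s (g (Quotient.mk s x).out) := by rw [h1]
      _ = f (Quotient.mk s x) := by
          rw [hg]; simp only [Quotient.out_eq]
end

section
/- Let M be a homogeneous n-graph, E an equivalence relation on M invariant under every automorphism of M, and s a colour such that for any two distinct E-classes A, B there exist a ∈ A and b ∈ B with c(a,b) = s. Then the induced action of the automorphism group of M on the set of E-classes is 2-transitive: for any ordered pairs (A,B) and (A′,B′) of distinct E-classes there is an automorphism σ of M with σ(A) = A′ and σ(B) = B′. -/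
/-!
Common definitions for edge-coloured graphs ("n-graphs").
`V` is the vertex set and `C` the set of colours; `c x y` is the colour of the
pair `{x, y}` (only meaningful for `x ≠ y`).
-/

variable {V C : Type*}

/-- if a colour `s` is realised across any two distinct classes
of an invariant equivalence relation `E` on a homogeneous `n`-graph, then the
induced action of the automorphism group on the `E`-classes is 2-transitive. -/
theorem stmt7 {V : Type*} {n : ℕ} (hn : 2 ≤ n) (c : V → V → Fin n)
    (hsymm : CSymm c) (hall : CAll c) (hhom : CHom c)
    (E : V → V → Prop) (hE : Equivalence E)
    (hinv : ∀ σ : Equiv.Perm V, CAuto c σ → ∀ x y, E x y → E (σ x) (σ y))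
    (s : Fin n)
    (hcross : ∀ A B : V, ¬ E A B → ∃ a b : V, E A a ∧ E B b ∧ c a b = s) :
    ∀ A B A' B' : V, ¬ E A B → ¬ E A' B' →
      ∃ σ : Equiv.Perm V, CAuto c σ ∧ E A' (σ A) ∧ E B' (σ B) := by
  intro A B A' B' hAB hAB'
  obtain ⟨a, b, hAa, hBb, hab⟩ := hcross A B hAB
  obtain ⟨a', b', hAa', hBb', hab'⟩ := hcross A' B' hAB'
  classical
  have hne : a ≠ b := by
    rintro rfl
    exact hAB (hE.trans hAa (hE.symm hBb))
  have hne' : a' ≠ b' := by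
    rintro rfl
    exact hAB' (hE.trans hAa' (hE.symm hBb'))
  set f : V → V := fun x => if x = a then a' else b' with hf
  have hfa : f a = a' := by simp [hf]
  have hfb : f b = b' := by simp [hf, hne.symm]
  have hmem : ∀ x ∈ ({a, b} : Finset V), x = a ∨ x = b := by
    intro x hx; simpa using hx
  obtain ⟨σ, hσ, hσeq⟩ := hhom {a, b} f
    (by
      intro x hx y hy hxy
      rcases hmem x (by simpa using hx) with rfl | rfl <;>
        rcases hmem y (by simpa using hy) with rfl | rfl <;>
        simp_all [hfa, hfb])
    (by
      intro x hx y hy hxy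
      rcases hmem x hx with rfl | rfl <;> rcases hmem y hy with rfl | rfl
      · exact absurd rfl hxy
      · rw [hfa, hfb, hab, hab']
      · rw [hfa, hfb, hsymm, hab', hsymm, hab]
      · exact absurd rfl hxy)
  refine ⟨σ, hσ, ?_, ?_⟩
  · have : σ a = a' := by rw [hσeq a (by simp), hfa]
    exact hE.trans hAa' (hE.symm (this ▸ hinv σ hσ A a hAa))
  · have : σ b = b' := by rw [hσeq b (by simp), hfb]
    exact hE.trans hBb' (hE.symm (this ▸ hinv σ hσ B b hBb))
end

section
/- Let M be a homogeneous 3-graph in which the relation 'x = y or c(x,y) = R' is an equivalence relation all of whose classes have the same finite size n, and suppose the induced action of the automorphism group of M on the set of R-classes is 2-transitive. Then for every a ∈ M and every R-class B not containing a, 1 ≤ |S(a) ∩ B| ≤ n − 1. -/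
/-!
Common definitions for edge-coloured graphs ("n-graphs").
`V` is the vertex set and `C` the set of colours; `c x y` is the colour of the
pair `{x, y}` (only meaningful for `x ≠ y`).
-/

variable {V C : Type*}

/-- Key lemma: if the class of `b` is monochromatic in colour `t` as seen
from `a`, we get a contradiction with the realisation of the other colour `s`. -/
lemma key8 {V : Type*} (c : V → V → Fin 3)
    (hsymm : CSymm c) (hall : CAll c) (hhom : CHom c)
    (hE : Equivalence (CErel c))
    (h2trans : ∀ A B A' B' : V, ¬ CErel c A B → ¬ CErel c A' B' →
      ∃ σ : Equiv.Perm V, CAuto c σ ∧ CErel c A' (σ A) ∧ CErel c B' (σ B))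
    (a b : V) (hab : ¬ CErel c a b)
    (t s : Fin 3) (hs : s ≠ 0) (hst : s ≠ t)
    (mono : ∀ x, CErel c b x → c a x = t) : False := by
  classical
  have hab' : a ≠ b := fun h => hab (h ▸ hE.refl a)
  obtain ⟨u, v, huv, hcuv⟩ := hall s
  have huvE : ¬ CErel c u v := by
    rintro (rfl | h)
    · exact huv rfl
    · rw [h] at hcuv; exact hs hcuv.symm
  obtain ⟨σ, hσ, hAa, hBb⟩ := h2trans u v a b huvE hab
  set a' := σ u with ha'def
  set b' := σ v with hb'def
  have ha'b' : a' ≠ b' := by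
    intro h
    exact hab (hE.trans hAa (hE.symm (h ▸ hBb)))
  have hc' : c a' b' = s := by rw [hσ u v huv, hcuv]
  have hcab' : c a b' = t := mono b' hBb
  have hcab : c a b = t := mono b (hE.refl b)
  by_cases h : a' = a
  · rw [h] at hc'
    rw [hc'] at hcab'
    exact hst hcab'
  · -- a' ≠ a, so c a a' = 0
    have hb'a : b' ≠ a := by
      intro hba
      exact hab (hE.symm (hba ▸ hBb))
    have h0 : c a a' = 0 := by
      rcases hAa with he | h0
      · exact absurd he.symm h
      · exact h0
    -- homogeneity: map b' ↦ a, a ↦ b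
    have hab'' : a ≠ b' := fun h => hb'a h.symm
    set f : V → V := fun x => if x = b' then a else b with hfdef
    have hfb' : f b' = a := if_pos rfl
    have hfa : f a = b := if_neg hab''
    have hinj : Set.InjOn f (↑({b', a} : Finset V) : Set V) := by
      intro x hx y hy hxy
      simp only [Finset.coe_insert, Finset.coe_singleton, Set.mem_insert_iff,
        Set.mem_singleton_iff] at hx hy
      rcases hx with hx | hx <;> rcases hy with hy | hy <;> rw [hx, hy] at hxy ⊢
      · rw [hfb', hfa] at hxy
        exact absurd hxy hab'
      · rw [hfb', hfa] at hxy
        exact absurd hxy.symm hab'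
    have hcp : ∀ x ∈ ({b', a} : Finset V), ∀ y ∈ ({b', a} : Finset V), x ≠ y →
        c (f x) (f y) = c x y := by
      intro x hx y hy hxy
      simp only [Finset.mem_insert, Finset.mem_singleton] at hx hy
      rcases hx with hx | hx <;> rcases hy with hy | hy <;> rw [hx, hy] at hxy ⊢
      · exact absurd rfl hxy
      · rw [hfb', hfa, hcab, hsymm b' a, hcab']
      · rw [hfa, hfb', hsymm b a, hcab, hcab']
      · exact absurd rfl hxy
    obtain ⟨τ, hτauto, hτ⟩ := hhom {b', a} f hinj hcp
    have hτb' : τ b' = a := by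
      rw [hτ b' (Finset.mem_insert_self _ _), hfb']
    have hτa : τ a = b := by
      rw [hτ a (Finset.mem_insert_of_mem (Finset.mem_singleton_self a)), hfa]
    have haa' : a ≠ a' := fun he => h he.symm
    have hτ0 : c b (τ a') = 0 := by
      rw [← hτa, hτauto a a' haa', h0]
    have h1 : c a (τ a') = t := mono _ (Or.inr hτ0)
    have h2 : c a (τ a') = s := by
      rw [← hτb', hτauto b' a' ha'b'.symm, hsymm b' a', hc']
    rw [h1] at h2
    exact hst h2.symm

/-- in a homogeneous 3-graph with `R`-classes all of finite size
`n` and a 2-transitive induced action on the classes, `1 ≤ |S(a) ∩ B| ≤ n - 1`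
for every vertex `a` and every `R`-class `B` not containing `a`. -/
theorem stmt8 {V : Type*} (c : V → V → Fin 3)
    (hsymm : CSymm c) (hall : CAll c) (hhom : CHom c)
    (hE : Equivalence (CErel c))
    (n : ℕ)
    (hsize : ∀ v : V, {x | CErel c v x}.Finite ∧ {x | CErel c v x}.ncard = n)
    (h2trans : ∀ A B A' B' : V, ¬ CErel c A B → ¬ CErel c A' B' →
      ∃ σ : Equiv.Perm V, CAuto c σ ∧ CErel c A' (σ A) ∧ CErel c B' (σ B)) :
    ∀ a b : V, ¬ CErel c a b →
      1 ≤ (CNbhd c 1 a ∩ {x | CErel c b x}).ncard ∧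
        (CNbhd c 1 a ∩ {x | CErel c b x}).ncard ≤ n - 1 := by
  intro a b hab
  have hBfin := (hsize b).1
  have hBcard := (hsize b).2
  set K := CNbhd c 1 a ∩ {x | CErel c b x} with hKdef
  have hKsub : K ⊆ {x | CErel c b x} := Set.inter_subset_right
  have hKfin : K.Finite := hBfin.subset hKsub
  constructor
  · by_contra hlt
    have hK0 : K.ncard = 0 := by omega
    have hKempty : K = ∅ := (Set.ncard_eq_zero hKfin).mp hK0
    refine key8 c hsymm hall hhom hE h2trans a b hab 2 1 (by decide) (by decide) ?_
    intro x hx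
    have hxa : x ≠ a := fun h => hab (hE.symm (h ▸ hx))
    have hx1 : c a x ≠ 1 := by
      intro h1
      have : x ∈ K := ⟨⟨hxa, h1⟩, hx⟩
      rw [hKempty] at this
      exact this
    have hx0 : c a x ≠ 0 := fun h0 => hab (hE.trans (Or.inr h0) (hE.symm hx))
    omega
  · by_contra hlt
    push_neg at hlt
    have hle : K.ncard ≤ n := hBcard ▸ Set.ncard_le_ncard hKsub hBfin
    have hKB : K = {x | CErel c b x} := by
      apply Set.eq_of_subset_of_ncard_le hKsub _ hBfin
      omega
    refine key8 c hsymm hall hhom hE h2trans a b hab 1 2 (by decide) (by decide) ?_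
    intro x hx
    have : x ∈ K := hKB ▸ hx
    exact this.1.2
end

section
/- Let M be a homogeneous 3-graph in which the relation 'x = y or c(x,y) = R' is an equivalence relation all of whose classes have the same finite size n, and suppose the induced action of the automorphism group of M on the set of R-classes is 2-transitive. Then for any two distinct R-classes A, B and any b, b′ ∈ B there is an automorphism σ of M with σ(b) = b′, σ(A) = A and σ(B) = B; in particular the setwise stabiliser of A and B acts transitively on B and on A. -/
/-!
Common definitions for edge-coloured graphs ("n-graphs").
`V` is the vertex set and `C` the set of colours; `c x y` is the colour of the
pair `{x, y}` (only meaningful for `x ≠ y`).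
-/

variable {V C : Type*}

/-!
It suffices that the stabiliser of a vertex `b` is transitive on the `R`-classes other than that
of `b`: compose with an automorphism moving `b₁` to `b₂`. If no automorphism fixing `b` maps the
class of `x` to that of `y`, then by homogeneity the two classes show disjoint colours towards `b`,
and every other class is monochromatic towards `b` (one showing both colours could be moved onto
the class of `y` by an automorphism fixing `b`). By vertex-transitivity this holds towards every
vertex, so the colour between two distinct classes depends only on the classes, and by
2-transitivity not even on them, contradicting the disjointness.
-/

section Automorphisms

variable {c : V → V → C} {σ τ : Equiv.Perm V}

theorem CAuto.mul (hσ : CAuto c σ) (hτ : CAuto c τ) : CAuto c (σ * τ) := by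
  intro x y hxy
  rw [Equiv.Perm.mul_apply, Equiv.Perm.mul_apply, hσ _ _ (τ.injective.ne hxy), hτ _ _ hxy]

theorem CHom.cTrans (hhom : CHom c) : CTrans c := by
  intro x y
  obtain ⟨σ, hσ, hσx⟩ := hhom {x} (fun _ => y) (by simp) (by simp)
  exact ⟨σ, hσ, hσx x (Finset.mem_singleton_self x)⟩

theorem CHom.exists_fix_apply_eq (hsymm : CSymm c) (hhom : CHom c) {b x y : V}
    (hx : b ≠ x) (hy : b ≠ y) (hcol : c b x = c b y) :
    ∃ σ : Equiv.Perm V, CAuto c σ ∧ σ b = b ∧ σ x = y := by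
  classical
  obtain ⟨σ, hσ, hσf⟩ := hhom {b, x} (fun z => if z = x then y else z)
    (by
      intro u hu v hv huv
      simp only [Finset.coe_insert, Finset.coe_singleton, Set.mem_insert_iff,
        Set.mem_singleton_iff] at hu hv
      rcases hu with rfl | rfl <;> rcases hv with rfl | rfl <;> simp_all)
    (by
      intro u hu v hv huv
      simp only [Finset.mem_insert, Finset.mem_singleton] at hu hv
      rcases hu with hu | hu <;> rcases hv with hv | hv <;> subst u v <;>
        simp_all [hsymm y b, hsymm x b])
  exact ⟨σ, hσ, by simpa [hx] using hσf b (by simp), by simpa using hσf x (by simp)⟩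

end Automorphisms

section RClasses

variable {c : V → V → Fin 3} {σ : Equiv.Perm V}

theorem colour_ne_zero_of_not_cErel {x y : V} (h : ¬ CErel c x y) : c x y ≠ 0 :=
  fun h0 => h (Or.inr h0)

theorem ne_of_not_cErel {x y : V} (h : ¬ CErel c x y) : x ≠ y :=
  fun he => h (Or.inl he)

theorem not_cErel_of_not_cErel_of_cErel (hE : Equivalence (CErel c)) {a z z' : V}
    (h : ¬ CErel c a z) (hz : CErel c z z') : ¬ CErel c a z' :=
  fun h' => h (hE.trans h' (hE.symm hz))

theorem setOf_cErel_eq (hE : Equivalence (CErel c)) {a a' : V} (h : CErel c a a') :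
    {x | CErel c a' x} = {x | CErel c a x} :=
  Set.ext fun _ => ⟨hE.trans h, hE.trans (hE.symm h)⟩

theorem CAuto.cErel_iff (hσ : CAuto c σ) {x y : V} : CErel c (σ x) (σ y) ↔ CErel c x y := by
  unfold CErel
  rw [σ.injective.eq_iff]
  by_cases h : x = y
  · simp [h]
  · simp [h, hσ x y h]

theorem CAuto.image_setOf_cErel (hσ : CAuto c σ) (a : V) :
    σ '' {x | CErel c a x} = {x | CErel c (σ a) x} := by
  ext x
  rw [Equiv.image_eq_preimage_symm]
  simp only [Set.mem_preimage, Set.mem_ofPred_eq]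
  rw [← hσ.cErel_iff]
  simp

end RClasses

def CClassesMonochromaticFrom (c : V → V → Fin 3) (v : V) : Prop :=
  ∀ z z' : V, ¬ CErel c v z → CErel c z z' → c v z = c v z'

theorem fin_three_eq_or_eq_of_ne_zero {i j k : Fin 3} (hi : i ≠ 0) (hj : j ≠ 0) (hk : k ≠ 0)
    (hij : i ≠ j) : k = i ∨ k = j := by
  fin_cases i <;> fin_cases j <;> fin_cases k <;> simp_all

section Monochromatic

variable {c : V → V → Fin 3}

theorem CAuto.cClassesMonochromaticFrom (hE : Equivalence (CErel c)) {σ : Equiv.Perm V}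
    (hσ : CAuto c σ) {b : V} (hb : CClassesMonochromaticFrom c b) :
    CClassesMonochromaticFrom c (σ b) := by
  intro z z' hbz hzz'
  obtain ⟨u, rfl⟩ := σ.surjective z
  obtain ⟨u', rfl⟩ := σ.surjective z'
  rw [hσ.cErel_iff] at hbz hzz'
  have hbu' := not_cErel_of_not_cErel_of_cErel hE hbz hzz'
  rw [hσ _ _ (ne_of_not_cErel hbz), hσ _ _ (ne_of_not_cErel hbu')]
  exact hb u u' hbz hzz'

theorem cClassesMonochromaticFrom_of_colour_ne (hsymm : CSymm c) (hhom : CHom c)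
    (hE : Equivalence (CErel c)) {b x y : V} (hbx : ¬ CErel c b x) (hby : ¬ CErel c b y)
    (hno : ∀ x' y', CErel c x x' → CErel c y y' → c b x' ≠ c b y') :
    CClassesMonochromaticFrom c b := by
  intro z z' hbz hzz'
  by_contra hne
  have hbz' := not_cErel_of_not_cErel_of_cErel hE hbz hzz'
  have realised : ∀ k : Fin 3, k ≠ 0 → ∃ w, CErel c z w ∧ ¬ CErel c b w ∧ c b w = k := by
    intro k hk
    rcases fin_three_eq_or_eq_of_ne_zero (colour_ne_zero_of_not_cErel hbz)
      (colour_ne_zero_of_not_cErel hbz') hk hne with h | h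
    · exact ⟨z, hE.refl z, hbz, h.symm⟩
    · exact ⟨z', hzz', hbz', h.symm⟩
  obtain ⟨w, hzw, hbw, hwy⟩ := realised _ (colour_ne_zero_of_not_cErel hby)
  obtain ⟨w', hzw', hbw', hw'x⟩ := realised _ (colour_ne_zero_of_not_cErel hbx)
  obtain ⟨σ, hσ, hσb, hσw⟩ :=
    hhom.exists_fix_apply_eq hsymm (ne_of_not_cErel hbw) (ne_of_not_cErel hby) hwy
  have hσw' : c b (σ w') = c b w' := by
    simpa only [hσb] using hσ b w' (ne_of_not_cErel hbw')
  refine hno x (σ w') (hE.refl x) ?_ (by rw [hσw', hw'x])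
  rw [← hσw, hσ.cErel_iff]
  exact hE.trans (hE.symm hzw) hzw'

theorem colour_eq_of_cErel_of_cErel (hsymm : CSymm c) (hE : Equivalence (CErel c))
    (hmono : ∀ v, CClassesMonochromaticFrom c v) {u v u' v' : V} (huv : ¬ CErel c u v)
    (hu : CErel c u u') (hv : CErel c v v') : c u v = c u' v' := by
  have hv'u : ¬ CErel c v' u := fun h => huv (hE.symm (hE.trans hv h))
  rw [hmono u v v' huv hv, hsymm u v', hmono v' u u' hv'u hu, hsymm]

theorem colour_eq_of_not_cErel (hsymm : CSymm c) (hE : Equivalence (CErel c))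
    (h2trans : ∀ A B A' B' : V, ¬ CErel c A B → ¬ CErel c A' B' →
      ∃ σ : Equiv.Perm V, CAuto c σ ∧ CErel c A' (σ A) ∧ CErel c B' (σ B))
    (hmono : ∀ v, CClassesMonochromaticFrom c v) {u v u' v' : V} (huv : ¬ CErel c u v)
    (hu'v' : ¬ CErel c u' v') : c u v = c u' v' := by
  obtain ⟨σ, hσ, hu, hv⟩ := h2trans u v u' v' huv hu'v'
  rw [← hσ u v (ne_of_not_cErel huv)]
  exact colour_eq_of_cErel_of_cErel hsymm hE hmono (mt hσ.cErel_iff.1 huv) (hE.symm hu)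
    (hE.symm hv)

theorem exists_fix_cErel_apply_of_not_cErel (hsymm : CSymm c) (hhom : CHom c)
    (hE : Equivalence (CErel c))
    (h2trans : ∀ A B A' B' : V, ¬ CErel c A B → ¬ CErel c A' B' →
      ∃ σ : Equiv.Perm V, CAuto c σ ∧ CErel c A' (σ A) ∧ CErel c B' (σ B))
    {b x y : V} (hbx : ¬ CErel c b x) (hby : ¬ CErel c b y) :
    ∃ σ : Equiv.Perm V, CAuto c σ ∧ σ b = b ∧ CErel c y (σ x) := by
  by_contra hbad
  have hno : ∀ x' y', CErel c x x' → CErel c y y' → c b x' ≠ c b y' := by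
    intro x' y' hx hy hcol
    obtain ⟨σ, hσ, hσb, hσx⟩ := hhom.exists_fix_apply_eq hsymm
      (ne_of_not_cErel (not_cErel_of_not_cErel_of_cErel hE hbx hx))
      (ne_of_not_cErel (not_cErel_of_not_cErel_of_cErel hE hby hy)) hcol
    have hσxx' : CErel c (σ x) y' := by rw [← hσx, hσ.cErel_iff]; exact hx
    exact hbad ⟨σ, hσ, hσb, hE.trans hy (hE.symm hσxx')⟩
  have hmono : ∀ v, CClassesMonochromaticFrom c v := by
    intro v
    obtain ⟨σ, hσ, rfl⟩ := hhom.cTrans b v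
    exact hσ.cClassesMonochromaticFrom hE
      (cClassesMonochromaticFrom_of_colour_ne hsymm hhom hE hbx hby hno)
  exact hno x y (hE.refl x) (hE.refl y) (colour_eq_of_not_cErel hsymm hE h2trans hmono hbx hby)

end Monochromatic

theorem stmt9_general {V : Type*} (c : V → V → Fin 3)
    (hsymm : CSymm c) (hhom : CHom c)
    (hE : Equivalence (CErel c))
    (h2trans : ∀ A B A' B' : V, ¬ CErel c A B → ¬ CErel c A' B' →
      ∃ σ : Equiv.Perm V, CAuto c σ ∧ CErel c A' (σ A) ∧ CErel c B' (σ B)) :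
    ∀ a b : V, ¬ CErel c a b → ∀ b₁ b₂ : V, CErel c b b₁ → CErel c b b₂ →
      ∃ σ : Equiv.Perm V, CAuto c σ ∧ σ b₁ = b₂ ∧
        (⇑σ) '' {x | CErel c a x} = {x | CErel c a x} ∧
        (⇑σ) '' {x | CErel c b x} = {x | CErel c b x} := by
  intro a b hab b₁ b₂ hb₁ hb₂
  obtain ⟨τ, hτ, hτb₁⟩ := hhom.cTrans b₁ b₂
  have hb₂a : ¬ CErel c b₂ a := fun h => hab (hE.symm (hE.trans hb₂ h))
  have hb₂τa : ¬ CErel c b₂ (τ a) := by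
    rw [← hτb₁, hτ.cErel_iff]
    exact fun h => hab (hE.symm (hE.trans hb₁ h))
  obtain ⟨ρ, hρ, hρb₂, hρa⟩ :=
    exists_fix_cErel_apply_of_not_cErel hsymm hhom hE h2trans hb₂τa hb₂a
  have hσ := hρ.mul hτ
  have hσb₁ : (ρ * τ) b₁ = b₂ := by rw [Equiv.Perm.mul_apply, hτb₁, hρb₂]
  have hσb : CErel c b ((ρ * τ) b) := by
    have h : CErel c ((ρ * τ) b₁) ((ρ * τ) b) := hσ.cErel_iff.2 (hE.symm hb₁)
    exact hE.trans hb₂ (hσb₁ ▸ h)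
  refine ⟨ρ * τ, hσ, hσb₁, ?_, ?_⟩
  · rw [hσ.image_setOf_cErel, Equiv.Perm.mul_apply, setOf_cErel_eq hE hρa]
  · rw [hσ.image_setOf_cErel, setOf_cErel_eq hE hσb]

/-- in a homogeneous 3-graph with `R`-classes all of finite size
`n` and a 2-transitive induced action on the classes, the setwise stabiliser of
two distinct classes `A`, `B` acts transitively on `B` (and hence on `A`). -/
theorem stmt9 {V : Type*} (c : V → V → Fin 3)
    (hsymm : CSymm c) (hall : CAll c) (hhom : CHom c)
    (hE : Equivalence (CErel c))
    (n : ℕ)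
    (hsize : ∀ v : V, {x | CErel c v x}.Finite ∧ {x | CErel c v x}.ncard = n)
    (h2trans : ∀ A B A' B' : V, ¬ CErel c A B → ¬ CErel c A' B' →
      ∃ σ : Equiv.Perm V, CAuto c σ ∧ CErel c A' (σ A) ∧ CErel c B' (σ B)) :
    ∀ a b : V, ¬ CErel c a b → ∀ b₁ b₂ : V, CErel c b b₁ → CErel c b b₂ →
      ∃ σ : Equiv.Perm V, CAuto c σ ∧ σ b₁ = b₂ ∧
        (⇑σ) '' {x | CErel c a x} = {x | CErel c a x} ∧
        (⇑σ) '' {x | CErel c b x} = {x | CErel c b x} :=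
  stmt9_general c hsymm hhom hE h2trans
end

section
/- Let M be a homogeneous 3-graph in which the relation 'x = y or c(x,y) = R' is an equivalence relation all of whose classes have the same finite size n, suppose the induced action of the automorphism group of M on the set of R-classes is 2-transitive, and suppose the relation 'x = y or c(x,y) = S' is not an equivalence relation on M. If |S(a) ∩ B| = 1 for every a ∈ M and every R-class B not containing a, then n = 2. -/
/-!
Common definitions for edge-coloured graphs ("n-graphs").
`V` is the vertex set and `C` the set of colours; `c x y` is the colour of the
pair `{x, y}` (only meaningful for `x ≠ y`).
-/

variable {V C : Type*}

/-- in a homogeneous 3-graph with `R`-classes all of finite size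
`n`, 2-transitive induced action on the classes and `S` not an equivalence
relation, if `|S(a) ∩ B| = 1` always holds then `n = 2`. -/
theorem stmt10 {V : Type*} (c : V → V → Fin 3)
    (hsymm : CSymm c) (hall : CAll c) (hhom : CHom c)
    (hE : Equivalence (CErel c))
    (hSnotE : ¬ Equivalence (fun x y : V => x = y ∨ c x y = 1))
    (n : ℕ)
    (hsize : ∀ v : V, {x | CErel c v x}.Finite ∧ {x | CErel c v x}.ncard = n)
    (h2trans : ∀ A B A' B' : V, ¬ CErel c A B → ¬ CErel c A' B' →
      ∃ σ : Equiv.Perm V, CAuto c σ ∧ CErel c A' (σ A) ∧ CErel c B' (σ B))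
    (hone : ∀ a b : V, ¬ CErel c a b →
      (CNbhd c 1 a ∩ {x | CErel c b x}).ncard = 1) :
    n = 2 := by
    classical
  have fin3 : ∀ i : Fin 3, i ≠ 0 → i ≠ 1 → i = 2 := by decide
  -- unique S-neighbour in a foreign class
  have key : ∀ u v : V, ¬ CErel c u v →
      ∃ w, w ≠ u ∧ c u w = 1 ∧ CErel c v w ∧
        ∀ x, x ≠ u → c u x = 1 → CErel c v x → x = w := by
    intro u v h
    obtain ⟨w, hw⟩ := Set.ncard_eq_one.mp (hone u v h)
    have hwmem : w ∈ CNbhd c 1 u ∩ {x | CErel c v x} := by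
      rw [hw]; exact Set.mem_singleton _
    obtain ⟨⟨hw1, hw2⟩, hw3⟩ := hwmem
    refine ⟨w, hw1, hw2, hw3, ?_⟩
    intro x hx1 hx2 hx3
    have hxmem : x ∈ CNbhd c 1 u ∩ {x | CErel c v x} := ⟨⟨hx1, hx2⟩, hx3⟩
    rw [hw] at hxmem
    exact hxmem
  -- n ≥ 2
  have hn2 : 2 ≤ n := by
    obtain ⟨x, y, hxy, h0⟩ := hall 0
    have hsub : ({x, y} : Set V) ⊆ {z | CErel c x z} := by
      rintro t (rfl | rfl)
      · exact hE.refl _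
      · exact Or.inr h0
    have h1 := Set.ncard_le_ncard hsub (hsize x).1
    rw [Set.ncard_pair hxy, (hsize x).2] at h1
    exact h1
  -- main: n ≥ 3 is impossible
  have hmain : ¬ 3 ≤ n := by
    intro h3
    -- a witness of failure of transitivity of S
    have hwit : ∃ x y z : V, x ≠ y ∧ y ≠ z ∧ x ≠ z ∧
        c x y = 1 ∧ c y z = 1 ∧ c x z ≠ 1 := by
      by_contra hno
      push_neg at hno
      apply hSnotE
      constructor
      · intro x; exact Or.inl rfl
      · intro x y h
        rcases h with rfl | h
        · exact Or.inl rfl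
        · exact Or.inr ((hsymm y x).trans h)
      · intro x y z h1 h2
        by_cases hxz : x = z
        · exact Or.inl hxz
        by_cases hcz : c x z = 1
        · exact Or.inr hcz
        rcases h1 with rfl | h1
        · exact h2
        rcases h2 with rfl | h2
        · exact Or.inr h1
        by_cases hxy : x = y
        · subst hxy; exact Or.inr h2
        by_cases hyz : y = z
        · subst hyz; exact Or.inr h1
        exact absurd (hno x y z hxy hyz hxz h1 h2) hcz
    obtain ⟨a, b, d, hab, hbd, had, cab, cbd, cad1⟩ := hwit
    have hnab : ¬ CErel c a b := by
      rintro (rfl | h)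
      · exact hab rfl
      · exact absurd (h.symm.trans cab) (by decide)
    have hnbd : ¬ CErel c b d := by
      rintro (rfl | h)
      · exact hbd rfl
      · exact absurd (h.symm.trans cbd) (by decide)
    have hnba : ¬ CErel c b a := fun h => hnab (hE.symm h)
    have hndb : ¬ CErel c d b := fun h => hnbd (hE.symm h)
    -- c a d = 2
    have cad0 : c a d ≠ 0 := by
      intro h0
      obtain ⟨w, _, _, _, hu⟩ := key b a hnba
      have h1 := hu a hab ((hsymm b a).trans cab) (hE.refl a)
      have h2 := hu d hbd.symm cbd (Or.inr h0)
      exact had (h1.trans h2.symm)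
    have cad : c a d = 2 := fin3 _ cad0 cad1
    have hnad : ¬ CErel c a d := by
      rintro (rfl | h)
      · exact had rfl
      · exact cad0 h
    -- d0: the S-neighbour of a in class d
    obtain ⟨d0, hd0a, hd0c, hd0D, hd0u⟩ := key a d hnad
    -- uniqueness of b as S-neighbour of a in class b
    obtain ⟨wb, hwb1, hwb2, hwb3, hwb4⟩ := key a b hnab
    have uniqAB : ∀ x, x ≠ a → c a x = 1 → CErel c b x → x = b := by
      intro x h1 h2 h3
      exact (hwb4 x h1 h2 h3).trans (hwb4 b (Ne.symm hab) cab (hE.refl b)).symm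
    -- uniqueness of b as S-neighbour of d in class b
    obtain ⟨wd, hwd1, hwd2, hwd3, hwd4⟩ := key d b hndb
    have uniqDB : ∀ x, x ≠ d → c d x = 1 → CErel c b x → x = b := by
      intro x h1 h2 h3
      exact (hwd4 x h1 h2 h3).trans
        (hwd4 b hbd ((hsymm d b).trans cbd) (hE.refl b)).symm
    -- two points of class b distinct from b
    have hcardb : (hsize b).1.toFinset.card = n := by
      rw [← Set.ncard_eq_toFinset_card _ (hsize b).1]
      exact (hsize b).2
    have hbmem : b ∈ (hsize b).1.toFinset := by
      rw [Set.Finite.mem_toFinset]; exact hE.refl b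
    have hcard2 : 1 < ((hsize b).1.toFinset.erase b).card := by
      rw [Finset.card_erase_of_mem hbmem, hcardb]
      omega
    obtain ⟨y1, hy1m, y2, hy2m, hy12⟩ := Finset.one_lt_card.mp hcard2
    have hy1b : y1 ≠ b := Finset.ne_of_mem_erase hy1m
    have hy2b : y2 ≠ b := Finset.ne_of_mem_erase hy2m
    have hy1B : CErel c b y1 := by
      have := Finset.mem_of_mem_erase hy1m
      rwa [Set.Finite.mem_toFinset] at this
    have hy2B : CErel c b y2 := by
      have := Finset.mem_of_mem_erase hy2m
      rwa [Set.Finite.mem_toFinset] at this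
    -- S-neighbour in class d, for points of class b
    have getz : ∀ y, CErel c b y → ∃ z, z ≠ y ∧ c y z = 1 ∧ CErel c d z ∧
        ∀ x, x ≠ y → c y x = 1 → CErel c d x → x = z := by
      intro y hyB
      exact key y d (fun h => hnbd (hE.trans hyB h))
    obtain ⟨z1, hz1y, hz1c, hz1D, hz1u⟩ := getz y1 hy1B
    obtain ⟨z2, hz2y, hz2c, hz2D, hz2u⟩ := getz y2 hy2B
    -- they cannot both be d0
    have hnotboth : z1 = d0 → z2 = d0 → False := by
      intro e1 e2
      have hc1 : c y1 d0 = 1 := e1 ▸ hz1c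
      have hc2 : c y2 d0 = 1 := e2 ▸ hz2c
      have hy1nd : y1 ≠ d0 := fun h => (e1 ▸ hz1y) h.symm
      have hy2nd : y2 ≠ d0 := fun h => (e2 ▸ hz2y) h.symm
      have hnz : ¬ CErel c d0 y1 := fun h =>
        hnbd (hE.trans hy1B (hE.symm (hE.trans hd0D h)))
      obtain ⟨w, _, _, _, hu⟩ := key d0 y1 hnz
      have f1 := hu y1 hy1nd ((hsymm d0 y1).trans hc1) (hE.refl y1)
      have f2 := hu y2 hy2nd ((hsymm d0 y2).trans hc2)
        (hE.trans (hE.symm hy1B) hy2B)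
      exact hy12 (f1.trans f2.symm)
    -- pick ys, zs with zs ≠ d0
    obtain ⟨ys, zs, hysb, hysB, hzy, hzc, hzD, hzu, hzd0⟩ :
        ∃ ys zs, ys ≠ b ∧ CErel c b ys ∧ zs ≠ ys ∧ c ys zs = 1 ∧
          CErel c d zs ∧ (∀ x, x ≠ ys → c ys x = 1 → CErel c d x → x = zs) ∧
          zs ≠ d0 := by
      by_cases h1 : z1 = d0
      · have h2 : z2 ≠ d0 := fun h2 => hnotboth h1 h2
        exact ⟨y2, z2, hy2b, hy2B, hz2y, hz2c, hz2D, hz2u, h2⟩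
      · exact ⟨y1, z1, hy1b, hy1B, hz1y, hz1c, hz1D, hz1u, h1⟩
    -- pick p in class d, away from d0 and zs
    obtain ⟨p, hpD, hpd0, hpz⟩ : ∃ p, CErel c d p ∧ p ≠ d0 ∧ p ≠ zs := by
      by_contra hno
      push_neg at hno
      have hsub : {x | CErel c d x} ⊆ ({d0, zs} : Set V) := by
        intro x hx
        by_cases h : x = d0
        · exact Or.inl h
        · exact Or.inr (hno x hx h)
      have h1 := Set.ncard_le_ncard hsub
        ((Set.finite_singleton zs).insert d0)
      have h2 : ({d0, zs} : Set V).ncard ≤ 2 := by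
        refine le_trans (Set.ncard_insert_le _ _) ?_
        simp [Set.ncard_singleton]
      rw [(hsize d).2] at h1
      omega
    -- colour facts
    have hnays : ¬ CErel c a ys := fun h => hnab (hE.trans h (hE.symm hysB))
    have haysne : a ≠ ys := fun h => hnays (h ▸ hE.refl a)
    have cays : c a ys = 2 := by
      refine fin3 _ (fun h0 => hnays (Or.inr h0)) (fun h1 => ?_)
      exact hysb (uniqAB ys (Ne.symm haysne) h1 hysB)
    have hndys : ¬ CErel c d ys := fun h => hnbd (hE.trans hysB (hE.symm h))
    have hdysne : d ≠ ys := fun h => hndys (h ▸ hE.refl d)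
    have cdys : c d ys = 2 := by
      refine fin3 _ (fun h0 => hndys (Or.inr h0)) (fun h1 => ?_)
      exact hysb (uniqDB ys (Ne.symm hdysne) h1 hysB)
    have hnap : ¬ CErel c a p := fun h => hnad (hE.trans h (hE.symm hpD))
    have hapne : a ≠ p := fun h => hnap (h ▸ hE.refl a)
    have cap : c a p = 2 := by
      refine fin3 _ (fun h0 => hnap (Or.inr h0)) (fun h1 => ?_)
      exact hpd0 (hd0u p (Ne.symm hapne) h1 hpD)
    have hnysp : ¬ CErel c ys p :=
      fun h => hndys (hE.symm (hE.trans h (hE.symm hpD)))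
    have hyspne : ys ≠ p := fun h => hnysp (h ▸ hE.refl ys)
    have cysp : c ys p = 2 := by
      refine fin3 _ (fun h0 => hnysp (Or.inr h0)) (fun h1 => ?_)
      exact hpz (hzu p (Ne.symm hyspne) h1 hpD)
    -- colours inside class d
    have cd0p : c d0 p = 0 := by
      have h := hE.trans (hE.symm hd0D) hpD
      rcases h with h | h
      · exact absurd h.symm hpd0
      · exact h
    have czsp : c zs p = 0 := by
      have h := hE.trans (hE.symm hzD) hpD
      rcases h with h | h
      · exact absurd h.symm hpz
      · exact h
    -- the finite partial isomorphism
    have hadys : a ≠ d := had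
    set A : Finset V := {a, ys, p} with hA
    set f : V → V := fun x => if x = a then a else if x = ys then d else ys
      with hf
    have hfa : f a = a := by simp [hf]
    have hfy : f ys = d := by simp [hf, Ne.symm haysne]
    have hfp : f p = ys := by simp [hf, Ne.symm hapne, Ne.symm hyspne]
    have hmemA : ∀ x ∈ A, x = a ∨ x = ys ∨ x = p := by
      intro x hx
      simpa [hA] using hx
    have hinj : Set.InjOn f (↑A : Set V) := by
      intro x hx y hy hxy
      have hx' := hmemA x (by exact_mod_cast hx)
      have hy' := hmemA y (by exact_mod_cast hy)
      rcases hx' with hx' | hx' | hx' <;> rcases hy' with hy' | hy' | hy' <;>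
        rw [hx', hy'] at hxy ⊢
      · rw [hfa, hfy] at hxy; exact absurd hxy had
      · rw [hfa, hfp] at hxy; exact absurd hxy haysne
      · rw [hfy, hfa] at hxy; exact absurd hxy.symm had
      · rw [hfy, hfp] at hxy; exact absurd hxy hdysne
      · rw [hfp, hfa] at hxy; exact absurd hxy.symm haysne
      · rw [hfp, hfy] at hxy; exact absurd hxy.symm hdysne
    have hcol : ∀ x ∈ A, ∀ y ∈ A, x ≠ y → c (f x) (f y) = c x y := by
      intro x hx y hy hxy
      rcases hmemA x hx with hx' | hx' | hx' <;>
        rcases hmemA y hy with hy' | hy' | hy' <;>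
        rw [hx', hy'] at hxy ⊢
      · exact absurd rfl hxy
      · rw [hfa, hfy, cad, cays]
      · rw [hfa, hfp, cays, cap]
      · rw [hfy, hfa, hsymm d a, hsymm ys a, cad, cays]
      · exact absurd rfl hxy
      · rw [hfy, hfp, cdys, cysp]
      · rw [hfp, hfa, hsymm ys a, hsymm p a, cays, cap]
      · rw [hfp, hfy, hsymm ys d, hsymm p ys, cdys, cysp]
      · exact absurd rfl hxy
    obtain ⟨σ, hσ, hfix⟩ := hhom A f hinj hcol
    have hsa : σ a = a := by
      rw [hfix a (by simp [hA])]; exact hfa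
    have hsy : σ ys = d := by
      rw [hfix ys (by simp [hA])]; exact hfy
    have hsp : σ p = ys := by
      rw [hfix p (by simp [hA])]; exact hfp
    -- σ d0 = b
    have h1 : c a (σ d0) = 1 := by
      have h := hσ a d0 (Ne.symm hd0a)
      rwa [hsa, hd0c] at h
    have h2 : c (σ d0) ys = 0 := by
      have h := hσ d0 p (Ne.symm hpd0)
      rwa [hsp, cd0p] at h
    have hBd0 : CErel c b (σ d0) :=
      hE.trans hysB (Or.inr ((hsymm ys (σ d0)).trans h2))
    have hd0ne : σ d0 ≠ a := fun h =>
      hd0a (σ.injective (h.trans hsa.symm))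
    have ed0 : σ d0 = b := uniqAB (σ d0) hd0ne h1 hBd0
    -- σ zs = b
    have h3 : c d (σ zs) = 1 := by
      have h := hσ ys zs (Ne.symm hzy)
      rwa [hsy, hzc] at h
    have h4 : c (σ zs) ys = 0 := by
      have h := hσ zs p (Ne.symm hpz)
      rwa [hsp, czsp] at h
    have hBzs : CErel c b (σ zs) :=
      hE.trans hysB (Or.inr ((hsymm ys (σ zs)).trans h4))
    have hzsne : σ zs ≠ d := fun h =>
      hzy (σ.injective (h.trans hsy.symm))
    have ezs : σ zs = b := uniqDB (σ zs) hzsne h3 hBzs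
    exact hzd0 (σ.injective (ezs.trans ed0.symm))
  omega
end

section
/- Let M be a homogeneous 3-graph in which the relation 'x = y or c(x,y) = R' is an equivalence relation with finite classes, the relation 'x = y or c(x,y) = S' is not an equivalence relation on M, and the induced action of the automorphism group of M on the set of R-classes is 2-transitive. Suppose that for some pair of distinct R-classes A, B there are m ≥ 2, r ≥ 1 and partitions A = A_1 ∪ … ∪ A_m and B = B_1 ∪ … ∪ B_m into nonempty parts of size r such that c(x,y) = S for all x ∈ A_i, y ∈ B_i and c(x,y) = T for all x ∈ A_i, y ∈ B_j with i ≠ j. Then m = 2. -/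
/-!
Common definitions for edge-coloured graphs ("n-graphs").
`V` is the vertex set and `C` the set of colours; `c x y` is the colour of the
pair `{x, y}` (only meaningful for `x ≠ y`).
-/

variable {V C : Type*}

section Stmt11Aux

variable {V : Type*}

private lemma autoInv (c : V → V → Fin 3) (σ : Equiv.Perm V) (h : CAuto c σ) :
    CAuto c σ⁻¹ := by
  intro x y hxy
  have hne : σ⁻¹ x ≠ σ⁻¹ y := fun he => hxy (by simpa using congrArg σ he)
  have h2 := h (σ⁻¹ x) (σ⁻¹ y) hne
  simpa using h2.symm

private lemma autoErel (c : V → V → Fin 3) (σ : Equiv.Perm V) (h : CAuto c σ)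
    {x y : V} (hxy : CErel c x y) : CErel c (σ x) (σ y) := by
  rcases hxy with rfl | h0
  · exact Or.inl rfl
  · by_cases hne : x = y
    · exact Or.inl (by rw [hne])
    · exact Or.inr (by rw [h x y hne]; exact h0)

private lemma ext2 (c : V → V → Fin 3) (hsymm : CSymm c) (hhom : CHom c)
    (p q p' q' : V) (hpq : p ≠ q) (hpq' : p' ≠ q') (hc : c p' q' = c p q) :
    ∃ σ : Equiv.Perm V, CAuto c σ ∧ σ p = p' ∧ σ q = q' := by
  classical
  have hfp : (fun v => if v = p then p' else q') p = p' := by simp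
  have hfq : (fun v => if v = p then p' else q') q = q' := by
    simp [if_neg hpq.symm]
  have hinj : Set.InjOn (fun v => if v = p then p' else q')
      (↑({p, q} : Finset V) : Set V) := by
    intro u hu v hv huv
    simp only [Finset.coe_insert, Finset.coe_singleton, Set.mem_insert_iff,
      Set.mem_singleton_iff] at hu hv
    rcases hu with rfl | rfl <;> rcases hv with rfl | rfl
    · rfl
    · rw [hfp, hfq] at huv; exact absurd huv hpq'
    · rw [hfp, hfq] at huv; exact absurd huv.symm hpq'
    · rfl
  have hc' : c q' p' = c q p := by rw [hsymm q' p', hsymm q p]; exact hc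
  have hcolp : ∀ x ∈ ({p, q} : Finset V), ∀ y ∈ ({p, q} : Finset V),
      x ≠ y → c ((fun v => if v = p then p' else q') x)
        ((fun v => if v = p then p' else q') y) = c x y := by
    intro x hx y hy hxy
    simp only [Finset.mem_insert, Finset.mem_singleton] at hx hy
    rcases hx with rfl | rfl <;> rcases hy with rfl | rfl
    · exact absurd rfl hxy
    · rw [hfp, hfq]; exact hc
    · rw [hfq, hfp]; exact hc'
    · exact absurd rfl hxy
  obtain ⟨σ, hσ, he⟩ := hhom {p, q} _ hinj hcolp
  refine ⟨σ, hσ, ?_, ?_⟩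
  · rw [he p (by simp)]; simp
  · rw [he q (by simp)]; rw [if_neg hpq.symm]

private lemma ext3 (c : V → V → Fin 3) (hsymm : CSymm c) (hhom : CHom c)
    (p q s p' q' s' : V) (hpq : p ≠ q) (hps : p ≠ s) (hqs : q ≠ s)
    (hpq' : p' ≠ q') (hps' : p' ≠ s') (hqs' : q' ≠ s')
    (h1 : c p' q' = c p q) (h2 : c p' s' = c p s) (h3 : c q' s' = c q s) :
    ∃ σ : Equiv.Perm V, CAuto c σ ∧ σ p = p' ∧ σ q = q' ∧ σ s = s' := by
  classical
  have hfp : (fun v => if v = p then p' else if v = q then q' else s') p = p' := by simp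
  have hfq : (fun v => if v = p then p' else if v = q then q' else s') q = q' := by
    simp [if_neg hpq.symm]
  have hfs : (fun v => if v = p then p' else if v = q then q' else s') s = s' := by
    simp [if_neg hps.symm, if_neg hqs.symm]
  have hinj : Set.InjOn (fun v => if v = p then p' else if v = q then q' else s')
      (↑({p, q, s} : Finset V) : Set V) := by
    intro u hu v hv huv
    simp only [Finset.coe_insert, Finset.coe_singleton, Set.mem_insert_iff,
      Set.mem_singleton_iff] at hu hv
    rcases hu with rfl | rfl | rfl <;> rcases hv with rfl | rfl | rfl
    · rfl
    · rw [hfp, hfq] at huv; exact absurd huv hpq'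
    · rw [hfp, hfs] at huv; exact absurd huv hps'
    · rw [hfp, hfq] at huv; exact absurd huv.symm hpq'
    · rfl
    · rw [hfq, hfs] at huv; exact absurd huv hqs'
    · rw [hfp, hfs] at huv; exact absurd huv.symm hps'
    · rw [hfq, hfs] at huv; exact absurd huv.symm hqs'
    · rfl
  have h1' : c q' p' = c q p := by rw [hsymm q' p', hsymm q p]; exact h1
  have h2' : c s' p' = c s p := by rw [hsymm s' p', hsymm s p]; exact h2
  have h3' : c s' q' = c s q := by rw [hsymm s' q', hsymm s q]; exact h3
  have hcolp : ∀ x ∈ ({p, q, s} : Finset V), ∀ y ∈ ({p, q, s} : Finset V),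
      x ≠ y → c ((fun v => if v = p then p' else if v = q then q' else s') x)
        ((fun v => if v = p then p' else if v = q then q' else s') y) = c x y := by
    intro x hx y hy hxy
    simp only [Finset.mem_insert, Finset.mem_singleton] at hx hy
    rcases hx with rfl | rfl | rfl <;> rcases hy with rfl | rfl | rfl
    · exact absurd rfl hxy
    · rw [hfp, hfq]; exact h1
    · rw [hfp, hfs]; exact h2
    · rw [hfq, hfp]; exact h1'
    · exact absurd rfl hxy
    · rw [hfq, hfs]; exact h3
    · rw [hfs, hfp]; exact h2'
    · rw [hfs, hfq]; exact h3'
    · exact absurd rfl hxy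
  obtain ⟨σ, hσ, he⟩ := hhom {p, q, s} _ hinj hcolp
  refine ⟨σ, hσ, ?_, ?_, ?_⟩
  · rw [he p (by simp)]; simp
  · rw [he q (by simp)]; rw [if_neg hpq.symm]; simp
  · rw [he s (by simp)]; rw [if_neg hps.symm, if_neg hqs.symm]

end Stmt11Aux

/-- in a homogeneous 3-graph with finite `R`-classes, `S` not an
equivalence relation and 2-transitive induced action on the classes, if two
distinct classes are partitioned into `m ≥ 2` parts of size `r` matched by `S`
(with `T` between non-matched parts), then `m = 2`. -/
theorem stmt11 {V : Type*} (c : V → V → Fin 3)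
    (hsymm : CSymm c) (hall : CAll c) (hhom : CHom c)
    (hE : Equivalence (CErel c))
    (hfin : ∀ v : V, {x | CErel c v x}.Finite)
    (hSnotE : ¬ Equivalence (fun x y : V => x = y ∨ c x y = 1))
    (h2trans : ∀ A B A' B' : V, ¬ CErel c A B → ¬ CErel c A' B' →
      ∃ σ : Equiv.Perm V, CAuto c σ ∧ CErel c A' (σ A) ∧ CErel c B' (σ B))
    (a b : V) (hab : ¬ CErel c a b)
    (m r : ℕ) (hm : 2 ≤ m) (hr : 1 ≤ r)
    (P Q : V → Fin m)
    (hPsize : ∀ i : Fin m, {x | CErel c a x ∧ P x = i}.ncard = r)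
    (hQsize : ∀ i : Fin m, {x | CErel c b x ∧ Q x = i}.ncard = r)
    (hcol : ∀ x y : V, CErel c a x → CErel c b y →
      (P x = Q y → c x y = 1) ∧ (P x ≠ Q y → c x y = 2)) :
    m = 2 := by
  classical
  by_contra hm2
  have hm3 : 3 ≤ m := by omega
  -- three distinct indices
  obtain ⟨i0, i1, i2, h01, h02, h12⟩ :
      ∃ i0 i1 i2 : Fin m, i0 ≠ i1 ∧ i0 ≠ i2 ∧ i1 ≠ i2 := by
    refine ⟨⟨0, by omega⟩, ⟨1, by omega⟩, ⟨2, by omega⟩, ?_, ?_, ?_⟩ <;>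
      · intro h
        have := congrArg Fin.val h
        simp at this
  -- helpers
  have nEsymm : ∀ {u v : V}, ¬ CErel c u v → ¬ CErel c v u :=
    fun h h' => h (hE.symm h')
  have neOf : ∀ {u v w0 : V}, ¬ CErel c u v → CErel c v w0 → w0 ≠ u := by
    intro u v w0 hnuv hvw h
    rw [h] at hvw
    exact hnuv (hE.symm hvw)
  have hne_ab : ∀ {x y : V}, CErel c a x → CErel c b y → x ≠ y := by
    intro x y hx hy h
    rw [← h] at hy
    exact hab (hE.trans hx (hE.symm hy))
  have Qpt : ∀ i : Fin m, ∃ y, CErel c b y ∧ Q y = i := by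
    intro i
    have h0 : {y | CErel c b y ∧ Q y = i}.ncard ≠ 0 := by rw [hQsize]; omega
    exact Set.nonempty_of_ncard_ne_zero h0
  have Ppt : ∀ i : Fin m, ∃ x, CErel c a x ∧ P x = i := by
    intro i
    have h0 : {x | CErel c a x ∧ P x = i}.ncard ≠ 0 := by rw [hPsize]; omega
    exact Set.nonempty_of_ncard_ne_zero h0
  -- master transported-structure lemma
  have master : ∀ u v : V, ¬ CErel c u v → ∀ x : V, CErel c u x →
      (∀ y : V, CErel c v y → (c x y = 1 ∨ c x y = 2)) ∧
      (∃ w : V, CErel c v w ∧ c x w = 1) ∧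
      (r = 1 → ∀ y y' : V, CErel c v y → CErel c v y' →
        c x y = 1 → c x y' = 1 → y = y') := by
    intro u v huv x hux
    obtain ⟨σ, hσ, hua, hvb⟩ := h2trans a b u v hab huv
    have hτ := autoInv c σ hσ
    have hax : CErel c a (σ⁻¹ x) := by
      have h1 : CErel c (σ a) x := hE.trans (hE.symm hua) hux
      have h2 := autoErel c σ⁻¹ hτ h1
      simpa using h2
    have hby : ∀ y, CErel c v y → CErel c b (σ⁻¹ y) := by
      intro y hy
      have h1 : CErel c (σ b) y := hE.trans (hE.symm hvb) hy
      have h2 := autoErel c σ⁻¹ hτ h1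
      simpa using h2
    have hxyne : ∀ y, CErel c v y → x ≠ y := by
      intro y hy h
      rw [← h] at hy
      exact huv (hE.trans hux (hE.symm hy))
    have hcc : ∀ y, CErel c v y → c x y = c (σ⁻¹ x) (σ⁻¹ y) :=
      fun y hy => (hτ x y (hxyne y hy)).symm
    refine ⟨?_, ?_, ?_⟩
    · intro y hy
      by_cases hpq : P (σ⁻¹ x) = Q (σ⁻¹ y)
      · left; rw [hcc y hy]; exact (hcol _ _ hax (hby y hy)).1 hpq
      · right; rw [hcc y hy]; exact (hcol _ _ hax (hby y hy)).2 hpq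
    · obtain ⟨w1, hw1⟩ := Qpt (P (σ⁻¹ x))
      have hne2 : σ⁻¹ x ≠ w1 := hne_ab hax hw1.1
      have h1 : c (σ⁻¹ x) w1 = 1 := (hcol _ _ hax hw1.1).1 hw1.2.symm
      refine ⟨σ w1, hE.trans hvb (autoErel c σ hσ hw1.1), ?_⟩
      have h2 := (hσ (σ⁻¹ x) w1 hne2).trans h1
      simpa using h2
    · intro hr1 y y' hy hy' h1 h1'
      have e1 : P (σ⁻¹ x) = Q (σ⁻¹ y) := by
        by_contra hne
        have h2 := (hcol _ _ hax (hby y hy)).2 hne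
        rw [← hcc y hy] at h2
        rw [h1] at h2
        exact absurd h2 (by decide)
      have e2 : P (σ⁻¹ x) = Q (σ⁻¹ y') := by
        by_contra hne
        have h2 := (hcol _ _ hax (hby y' hy')).2 hne
        rw [← hcc y' hy'] at h2
        rw [h1'] at h2
        exact absurd h2 (by decide)
      have hcard : {w | CErel c b w ∧ Q w = P (σ⁻¹ x)}.ncard = 1 :=
        (hQsize (P (σ⁻¹ x))).trans hr1
      obtain ⟨w0, hw0⟩ := Set.ncard_eq_one.mp hcard
      have m1 : σ⁻¹ y ∈ {w | CErel c b w ∧ Q w = P (σ⁻¹ x)} := ⟨hby y hy, e1.symm⟩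
      have m2 : σ⁻¹ y' ∈ {w | CErel c b w ∧ Q w = P (σ⁻¹ x)} := ⟨hby y' hy', e2.symm⟩
      rw [hw0] at m1 m2
      have m3 : σ⁻¹ y = σ⁻¹ y' := m1.trans m2.symm
      have := congrArg σ m3
      simpa using this
  have L3 : ∀ u v : V, ¬ CErel c u v → ∃ t1 t2 t3 : V,
      CErel c v t1 ∧ CErel c v t2 ∧ CErel c v t3 ∧ t1 ≠ t2 ∧ t1 ≠ t3 ∧ t2 ≠ t3 := by
    intro u v huv
    obtain ⟨σ, hσ, hua, hvb⟩ := h2trans a b u v hab huv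
    obtain ⟨y0, hy0⟩ := Qpt i0
    obtain ⟨y1, hy1⟩ := Qpt i1
    obtain ⟨y2, hy2⟩ := Qpt i2
    refine ⟨σ y0, σ y1, σ y2,
      hE.trans hvb (autoErel c σ hσ hy0.1),
      hE.trans hvb (autoErel c σ hσ hy1.1),
      hE.trans hvb (autoErel c σ hσ hy2.1), ?_, ?_, ?_⟩
    · intro h
      exact h01 ((hy0.2.symm.trans (congrArg Q (σ.injective h))).trans hy1.2)
    · intro h
      exact h02 ((hy0.2.symm.trans (congrArg Q (σ.injective h))).trans hy2.2)
    · intro h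
      exact h12 ((hy1.2.symm.trans (congrArg Q (σ.injective h))).trans hy2.2)
  by_cases hr2 : 2 ≤ r
  · -- Case r ≥ 2 : move a point within a part, contradiction
    have hfin0 : {x | CErel c a x ∧ P x = i0}.Finite :=
      (hfin a).subset fun x hx => hx.1
    have h1lt : 1 < {x | CErel c a x ∧ P x = i0}.ncard := by rw [hPsize]; omega
    obtain ⟨x1, hx1m, x1', hx1'm, hx11⟩ := (Set.one_lt_ncard hfin0).mp h1lt
    obtain ⟨hax1, hPx1⟩ := hx1m
    obtain ⟨hax1', hPx1'⟩ := hx1'm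
    obtain ⟨x2, hax2, hPx2⟩ := Ppt i1
    obtain ⟨y3, hby3, hQy3⟩ := Qpt i2
    obtain ⟨y1, hby1, hQy1⟩ := Qpt i0
    have e_aa : ∀ {u w : V}, CErel c a u → CErel c a w → u ≠ w → c u w = 0 :=
      fun hu hw hne => (hE.trans (hE.symm hu) hw).resolve_left hne
    have hne12 : x1 ≠ x2 := by
      intro h
      exact h01 ((hPx1.symm.trans (congrArg P h)).trans hPx2)
    have c13 : c x1 y3 = 2 := (hcol x1 y3 hax1 hby3).2 (by rw [hPx1, hQy3]; exact h02)
    have c1'3 : c x1' y3 = 2 := (hcol x1' y3 hax1' hby3).2 (by rw [hPx1', hQy3]; exact h02)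
    have c23 : c x2 y3 = 2 := (hcol x2 y3 hax2 hby3).2 (by rw [hPx2, hQy3]; exact h12)
    obtain ⟨σ1, hσ1, e1, e2, e3⟩ := ext3 c hsymm hhom x1 x1' y3 x1 x2 y3
      hx11 (hne_ab hax1 hby3) (hne_ab hax1' hby3)
      hne12 (hne_ab hax1 hby3) (hne_ab hax2 hby3)
      ((e_aa hax1 hax2 hne12).trans (e_aa hax1 hax1' hx11).symm)
      rfl (c23.trans c1'3.symm)
    have hy1'b : CErel c b (σ1 y1) := by
      have ha1 : CErel c y1 y3 := hE.trans (hE.symm hby1) hby3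
      have ha2 := autoErel c σ1 hσ1 ha1
      rw [e3] at ha2
      exact hE.trans hby3 (hE.symm ha2)
    have c1 : c x1 (σ1 y1) = 1 := by
      have ha := hσ1 x1 y1 (hne_ab hax1 hby1)
      rw [e1] at ha
      rw [ha]
      exact (hcol x1 y1 hax1 hby1).1 (by rw [hPx1, hQy1])
    have c2 : c x2 (σ1 y1) = 1 := by
      have ha := hσ1 x1' y1 (hne_ab hax1' hby1)
      rw [e2] at ha
      rw [ha]
      exact (hcol x1' y1 hax1' hby1).1 (by rw [hPx1', hQy1])
    have q1 : P x1 = Q (σ1 y1) := by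
      by_contra hne
      have := (hcol x1 (σ1 y1) hax1 hy1'b).2 hne
      rw [c1] at this
      exact absurd this (by decide)
    have q2 : P x2 = Q (σ1 y1) := by
      by_contra hne
      have := (hcol x2 (σ1 y1) hax2 hy1'b).2 hne
      rw [c2] at this
      exact absurd this (by decide)
    exact h01 ((hPx1.symm.trans (q1.trans q2.symm)).trans hPx2)
  · -- Case r = 1
    have hr1 : r = 1 := by omega
    have huniq : ∀ u v : V, ¬ CErel c u v → ∀ x : V, CErel c u x →
        ∀ y y' : V, CErel c v y → CErel c v y' → c x y = 1 → c x y' = 1 → y = y' :=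
      fun u v huv x hx => (master u v huv x hx).2.2 hr1
    have hdich : ∀ u v : V, ¬ CErel c u v → ∀ x : V, CErel c u x →
        ∀ y : V, CErel c v y → (c x y = 1 ∨ c x y = 2) :=
      fun u v huv x hx => (master u v huv x hx).1
    have hexist : ∀ u v : V, ¬ CErel c u v → ∀ x : V, CErel c u x →
        ∃ w : V, CErel c v w ∧ c x w = 1 :=
      fun u v huv x hx => (master u v huv x hx).2.1
    have pick : ∀ p q v0 : V, ¬ CErel c p v0 → ¬ CErel c q v0 →
        ∃ t, CErel c v0 t ∧ c p t = 2 ∧ c q t = 2 := by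
      intro p q v0 hp hq
      obtain ⟨t1, t2, t3, h1, h2, h3, d12, d13, d23⟩ := L3 p v0 hp
      have up := huniq p v0 hp p (hE.refl p)
      have uq := huniq q v0 hq q (hE.refl q)
      have dp := hdich p v0 hp p (hE.refl p)
      have dq := hdich q v0 hq q (hE.refl q)
      have key : ∃ t, CErel c v0 t ∧ c p t ≠ 1 ∧ c q t ≠ 1 := by
        by_contra hcon
        push_neg at hcon
        have f : ∀ t, CErel c v0 t → c p t = 1 ∨ c q t = 1 := by
          intro t ht
          by_cases h : c p t = 1
          · exact Or.inl h
          · exact Or.inr (hcon t ht h)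
        rcases f t1 h1 with a1 | b1 <;> rcases f t2 h2 with a2 | b2 <;>
          rcases f t3 h3 with a3 | b3
        · exact d12 (up t1 t2 h1 h2 a1 a2)
        · exact d12 (up t1 t2 h1 h2 a1 a2)
        · exact d13 (up t1 t3 h1 h3 a1 a3)
        · exact d23 (uq t2 t3 h2 h3 b2 b3)
        · exact d23 (up t2 t3 h2 h3 a2 a3)
        · exact d13 (uq t1 t3 h1 h3 b1 b3)
        · exact d12 (uq t1 t2 h1 h2 b1 b2)
        · exact d12 (uq t1 t2 h1 h2 b1 b2)
      obtain ⟨t, ht, hp1, hq1⟩ := key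
      exact ⟨t, ht, (dp t ht).resolve_left hp1, (dq t ht).resolve_left hq1⟩
    -- extract an SST triangle from failure of transitivity of S
    have htf : ¬ ∀ x y z : V, (x = y ∨ c x y = 1) → (y = z ∨ c y z = 1) →
        (x = z ∨ c x z = 1) := by
      intro h
      refine hSnotE ⟨fun x => Or.inl rfl, ?_, ?_⟩
      · intro x y hxy
        rcases hxy with rfl | h1
        · exact Or.inl rfl
        · exact Or.inr (by rw [hsymm y x]; exact h1)
      · intro x y z h1 h2
        exact h x y z h1 h2
    push_neg at htf
    obtain ⟨x, y, z, hxy, hyz, hxz1, hxz2⟩ := htf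
    rcases hxy with rfl | hSxy
    · rcases hyz with rfl | h
      · exact hxz1 rfl
      · exact hxz2 h
    rcases hyz with rfl | hSyz
    · exact hxz2 hSxy
    have hxyne : x ≠ y := by
      intro h
      rw [h] at hxz2
      exact hxz2 hSyz
    have hyzne : y ≠ z := by
      intro h
      rw [← h] at hxz2
      exact hxz2 hSxy
    have hnExy : ¬ CErel c x y := by
      rintro (h | h0)
      · exact hxyne h
      · rw [hSxy] at h0; exact absurd h0 (by decide)
    have hnEyz : ¬ CErel c y z := by
      rintro (h | h0)
      · exact hyzne h
      · rw [hSyz] at h0; exact absurd h0 (by decide)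
    have hnExz : ¬ CErel c x z := by
      rintro (h | h0)
      · exact hxz1 h
      · have hyx : ¬ CErel c y x := nEsymm hnExy
        have := huniq y x hyx y (hE.refl y) x z (hE.refl x) (Or.inr h0)
          (by rw [hsymm y x]; exact hSxy) hSyz
        exact hxz1 this
    have hcxz2 : c x z = 2 :=
      (hdich x z hnExz x (hE.refl x) z (hE.refl z)).resolve_left hxz2
    -- two points of the class of y at colour T from x
    have two : ∃ y1 y2, CErel c y y1 ∧ CErel c y y2 ∧ y1 ≠ y2 ∧
        c x y1 = 2 ∧ c x y2 = 2 := by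
      obtain ⟨t1, t2, t3, h1, h2, h3, d12, d13, d23⟩ := L3 x y hnExy
      have ux := huniq x y hnExy x (hE.refl x)
      have dx := hdich x y hnExy x (hE.refl x)
      by_cases e1 : c x t1 = 1
      · have e2 : c x t2 ≠ 1 := fun h => d12 (ux t1 t2 h1 h2 e1 h)
        have e3 : c x t3 ≠ 1 := fun h => d13 (ux t1 t3 h1 h3 e1 h)
        exact ⟨t2, t3, h2, h3, d23, (dx t2 h2).resolve_left e2,
          (dx t3 h3).resolve_left e3⟩
      · by_cases e2 : c x t2 = 1
        · have e3 : c x t3 ≠ 1 := fun h => d23 (ux t2 t3 h2 h3 e2 h)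
          exact ⟨t1, t3, h1, h3, d13, (dx t1 h1).resolve_left e1,
            (dx t3 h3).resolve_left e3⟩
        · exact ⟨t1, t2, h1, h2, d12, (dx t1 h1).resolve_left e1,
            (dx t2 h2).resolve_left e2⟩
    obtain ⟨y1, y2, hy1, hy2, hy12, hT1, hT2⟩ := two
    obtain ⟨wx, hwxz, hwx1⟩ := hexist x z hnExz x (hE.refl x)
    obtain ⟨w1, hw1z, hw11⟩ := hexist y z hnEyz y1 hy1
    obtain ⟨w2, hw2z, hw21⟩ := hexist y z hnEyz y2 hy2
    by_cases hcoh : ∀ p q w w'' : V, p ≠ q → w ≠ p → w ≠ q → w'' ≠ p → w'' ≠ q →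
        c p q = 2 → CErel c w w'' → c p w = 1 → c q w'' = 1 → w = w''
    · -- all T-pairs coherent: contradiction with y1 ≠ y2
      have hnExy1 : ¬ CErel c x y1 := fun h => hnExy (hE.trans (hE.symm (hE.symm h)) (hE.symm hy1))
      have hxy1 : x ≠ y1 := by
        intro h
        rw [← h] at hy1
        exact hnExy (hE.symm hy1)
      have hxy2 : x ≠ y2 := by
        intro h
        rw [← h] at hy2
        exact hnExy (hE.symm hy2)
      have hwx_x : wx ≠ x := neOf hnExz hwxz
      have hw1_x : w1 ≠ x := neOf hnExz hw1z
      have hw2_x : w2 ≠ x := neOf hnExz hw2z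
      have hclsy : ∀ {w0 yy : V}, CErel c z w0 → CErel c y yy → w0 ≠ yy := by
        intro w0 yy hw0 hyy h
        rw [h] at hw0
        exact hnEyz (hE.trans hyy (hE.symm hw0))
      have k1 : wx = w1 := hcoh x y1 wx w1 hxy1 hwx_x (hclsy hwxz hy1)
        hw1_x (hclsy hw1z hy1) hT1 (hE.trans (hE.symm hwxz) hw1z) hwx1 hw11
      have k2 : wx = w2 := hcoh x y2 wx w2 hxy2 hwx_x (hclsy hwxz hy2)
        hw2_x (hclsy hw2z hy2) hT2 (hE.trans (hE.symm hwxz) hw2z) hwx1 hw21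
      have hnEwxy : ¬ CErel c wx y := by
        intro h
        exact hnEyz (hE.symm (hE.trans hwxz h))
      have hcw1 : c wx y1 = 1 := by
        rw [hsymm wx y1, k1]
        exact hw11
      have hcw2 : c wx y2 = 1 := by
        rw [hsymm wx y2, k2]
        exact hw21
      exact hy12 (huniq wx y hnEwxy wx (hE.refl wx) y1 y2 hy1 hy2 hcw1 hcw2)
    · push_neg at hcoh
      obtain ⟨p, q, w, w'', hpq, hwp, hwq, hw''p, hw''q, hTpq, hEww'', hpw, hqw'', hne⟩ := hcoh
      have hnEpw : ¬ CErel c p w := by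
        rintro (h | h0)
        · exact hwp h.symm
        · rw [hpw] at h0; exact absurd h0 (by decide)
      have hnEqw'' : ¬ CErel c q w'' := by
        rintro (h | h0)
        · exact hw''q h.symm
        · rw [hqw''] at h0; exact absurd h0 (by decide)
      have hnEqw : ¬ CErel c q w := fun h => hnEqw'' (hE.trans h hEww'')
      -- common S-neighbour of the T-pair (p,q), transported from (x,z,y)
      obtain ⟨σ3, hσ3, g1, g2⟩ := ext2 c hsymm hhom x z p q hxz1 hpq
        (hTpq.trans hcxz2.symm)
      have hpw0 : c p (σ3 y) = 1 := by
        have hh := hσ3 x y hxyne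
        rw [g1] at hh
        exact hh.trans hSxy
      have hqw0 : c q (σ3 y) = 1 := by
        have hh := hσ3 z y (Ne.symm hyzne)
        rw [g2] at hh
        refine hh.trans ?_
        rw [hsymm z y]
        exact hSyz
      have hw0p : σ3 y ≠ p := by
        intro h
        rw [← g1] at h
        exact hxyne (σ3.injective h).symm
      have hw0q : σ3 y ≠ q := by
        intro h
        rw [← g2] at h
        exact hyzne (σ3.injective h)
      have hnEpw0 : ¬ CErel c p (σ3 y) := by
        rintro (h | h0)
        · exact hw0p h.symm
        · rw [hpw0] at h0; exact absurd h0 (by decide)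
      have hnEqw0 : ¬ CErel c q (σ3 y) := by
        rintro (h | h0)
        · exact hw0q h.symm
        · rw [hqw0] at h0; exact absurd h0 (by decide)
      have hqwT : c q w = 2 := by
        rcases hdich q w hnEqw q (hE.refl q) w (hE.refl w) with h | h
        · exact absurd (huniq q w hnEqw q (hE.refl q) w w'' (hE.refl w) hEww'' h hqw'') hne
        · exact h
      obtain ⟨u1, hu1E, hu1p, hu1q⟩ := pick p q w hnEpw hnEqw
      obtain ⟨u2, hu2E, hu2p, hu2q⟩ := pick p q (σ3 y) hnEpw0 hnEqw0
      have hu1p' : u1 ≠ p := neOf hnEpw hu1E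
      have hu1q' : u1 ≠ q := neOf hnEqw hu1E
      have hu2p' : u2 ≠ p := neOf hnEpw0 hu2E
      have hu2q' : u2 ≠ q := neOf hnEqw0 hu2E
      obtain ⟨σ4, hσ4, j1, j2, j3⟩ := ext3 c hsymm hhom p q u1 p q u2
        hpq hu1p'.symm hu1q'.symm hpq hu2p'.symm hu2q'.symm
        rfl (hu2p.trans hu1p.symm) (hu2q.trans hu1q.symm)
      have hEσw : CErel c (σ3 y) (σ4 w) := by
        have h5 := autoErel c σ4 hσ4 (hE.symm hu1E)
        rw [j3] at h5
        exact hE.trans hu2E h5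
      have hpσw : c p (σ4 w) = 1 := by
        have hh := hσ4 p w (Ne.symm hwp)
        rw [j1] at hh
        exact hh.trans hpw
      have heqw : σ4 w = σ3 y := huniq p (σ3 y) hnEpw0 p (hE.refl p) (σ4 w) (σ3 y)
        hEσw (hE.refl (σ3 y)) hpσw hpw0
      have hfin2 : c q (σ4 w) = 2 := by
        have hh := hσ4 q w (Ne.symm hwq)
        rw [j2] at hh
        exact hh.trans hqwT
      rw [heqw] at hfin2
      rw [hqw0] at hfin2
      exact absurd hfin2 (by decide)
end

section
/- Let M be an n-graph, s a colour, and let (a_i)_{i∈ℕ} and (b_i)_{i∈ℕ} be sequences of elements of M, all of them pairwise distinct, such that c(a_i, b_j) = s if and only if i ≤ j (an infinite half-graph for the colour s). Then there exist a strictly increasing function g : ℕ → ℕ and colours p, q, u with u ≠ s such that for all i < j: c(a_{g(i)}, a_{g(j)}) = p, c(b_{g(i)}, b_{g(j)}) = q and c(a_{g(j)}, b_{g(i)}) = u. In particular the subsequences (a_{g(i)}) and (b_{g(i)}) form a half-graph for s that is indiscernible as a sequence of pairs, and whose two horizontal sets are monochromatic cliques. -/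
/-!
Common definitions for edge-coloured graphs ("n-graphs").
`V` is the vertex set and `C` the set of colours; `c x y` is the colour of the
pair `{x, y}` (only meaningful for `x ≠ y`).
-/

variable {V C : Type*}

lemma ultra_exists_color {K : Type*} [Finite K] (U : Ultrafilter ℕ) (f : ℕ → K) :
    ∃ k : K, {n | f n = k} ∈ U := by
  have : (⋃ k ∈ (Set.univ : Set K), {n | f n = k}) ∈ U := by
    have : (⋃ k ∈ (Set.univ : Set K), {n | f n = k}) = Set.univ := by
      ext n; simp
    rw [this]; exact Filter.univ_mem
  rcases (Ultrafilter.finite_biUnion_mem_iff Set.finite_univ).mp this with ⟨k, -, hk⟩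
  exact ⟨k, hk⟩

lemma infinite_ramsey_pairs {K : Type*} [Finite K] (f : ℕ → ℕ → K) :
    ∃ g : ℕ → ℕ, StrictMono g ∧ ∃ k : K, ∀ i j : ℕ, i < j → f (g i) (g j) = k := by
  classical
  set U := Filter.hyperfilter ℕ with hU
  have hIoi : ∀ m : ℕ, Set.Ioi m ∈ U := fun m =>
    Nat.hyperfilter_le_atTop (Filter.Ioi_mem_atTop m)
  have hcol : ∀ m : ℕ, ∃ k : K, {j | f m j = k} ∈ U := fun m =>
    ultra_exists_color U (f m)
  choose col hcolU using hcol
  obtain ⟨k, hk⟩ := ultra_exists_color U col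
  let pick : {T : Set ℕ // T ∈ U} → ℕ := fun T =>
    (Filter.nonempty_of_mem T.2).choose
  have pick_mem : ∀ T : {T : Set ℕ // T ∈ U}, pick T ∈ T.1 := fun T =>
    (Filter.nonempty_of_mem T.2).choose_spec
  let A : {T : Set ℕ // T ∈ U} := ⟨{m | col m = k}, hk⟩
  let step : {T : Set ℕ // T ∈ U} → {T : Set ℕ // T ∈ U} := fun T =>
    ⟨T.1 ∩ {j | f (pick T) j = col (pick T)} ∩ Set.Ioi (pick T),
      Filter.inter_mem (Filter.inter_mem T.2 (hcolU (pick T))) (hIoi (pick T))⟩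
  let S : ℕ → {T : Set ℕ // T ∈ U} := fun t => step^[t] A
  have hSsucc : ∀ t, S (t + 1) = step (S t) := fun t =>
    Function.iterate_succ_apply' step t A
  let g : ℕ → ℕ := fun t => pick (S t)
  have hsub : ∀ t, (S (t+1)).1 ⊆ (S t).1 := by
    intro t x hx
    have hset : (S (t+1)).1 = (step (S t)).1 := by rw [hSsucc]
    rw [hset] at hx
    exact hx.1.1
  have hchain : ∀ i j, i ≤ j → (S j).1 ⊆ (S i).1 := by
    intro i j hij
    induction j with
    | zero => simp_all
    | succ j ih =>
      rcases Nat.lt_or_ge i (j+1) with h | h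
      · exact (hsub j).trans (ih (Nat.lt_succ_iff.mp h))
      · have : i = j + 1 := le_antisymm hij h
        subst this; exact fun x hx => hx
  have hmono : StrictMono g := by
    apply strictMono_nat_of_lt_succ
    intro t
    have hmem := pick_mem (S (t+1))
    have hset : (S (t+1)).1 = (step (S t)).1 := by rw [hSsucc]
    rw [hset] at hmem
    exact hmem.2
  have hA : ∀ t, g t ∈ A.1 := fun t => hchain 0 t (Nat.zero_le t) (pick_mem (S t))
  refine ⟨g, hmono, k, fun i j hij => ?_⟩
  have hj : g j ∈ (S (i+1)).1 := hchain (i+1) j hij (pick_mem (S j))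
  rw [hSsucc] at hj
  have : f (g i) (g j) = col (g i) := hj.1.2
  rw [this]
  exact hA i

/-- from any infinite half-graph for a colour `s` one can
extract a subsequence that is an indiscernible half-graph for `s` whose rows
are monochromatic cliques and whose "below-diagonal" colour differs from `s`. -/
theorem stmt12 {V : Type*} {n : ℕ} (hn : 2 ≤ n) (c : V → V → Fin n)
    (hsymm : CSymm c) (hall : CAll c)
    (s : Fin n) (a b : ℕ → V)
    (ha : ∀ i j : ℕ, i ≠ j → a i ≠ a j)
    (hb : ∀ i j : ℕ, i ≠ j → b i ≠ b j)
    (hab : ∀ i j : ℕ, a i ≠ b j)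
    (hhalf : ∀ i j : ℕ, c (a i) (b j) = s ↔ i ≤ j) :
    ∃ g : ℕ → ℕ, StrictMono g ∧ ∃ p q u : Fin n, u ≠ s ∧
      ∀ i j : ℕ, i < j →
        c (a (g i)) (a (g j)) = p ∧ c (b (g i)) (b (g j)) = q ∧
          c (a (g j)) (b (g i)) = u := by
  obtain ⟨g, hg, ⟨p, q, u⟩, hk⟩ :=
    infinite_ramsey_pairs (fun i j => (c (a i) (a j), c (b i) (b j), c (a j) (b i)))
  refine ⟨g, hg, p, q, u, ?_, fun i j hij => ?_⟩
  · have h01 := hk 0 1 one_pos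
    have hu : c (a (g 1)) (b (g 0)) = u := congrArg (·.2.2) h01
    intro hus
    rw [hus] at hu
    exact absurd ((hhalf _ _).mp hu) (not_le.mpr (hg one_pos))
  · have h := hk i j hij
    exact ⟨congrArg (·.1) h, congrArg (·.2.1) h, congrArg (·.2.2) h⟩
end

section
/- Let M be an infinite 3-graph whose automorphism group acts transitively on M, such that R(a) is infinite for every a ∈ M and the relation 'x = y or c(x,y) = R' is an equivalence relation on R(a) with finitely many classes. For c(a,b) = R let ℓ(a,b) = {a} ∪ (the class of b in R(a)). Then: (i) ℓ(a,b) is the unique maximal R-clique of M containing both a and b; (ii) any two distinct vertices of M lie in at most one member of 𝓛 = {ℓ(a,b) : c(a,b) = R}, equivalently any two distinct maximal R-cliques of M meet in at most one point; (iii) if moreover M is homogeneous, then every line ℓ(a,b) is infinite. Hence (M, 𝓛) is a semilinear space. -/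
/-!
Common definitions for edge-coloured graphs ("n-graphs").
`V` is the vertex set and `C` the set of colours; `c x y` is the colour of the
pair `{x, y}` (only meaningful for `x ≠ y`).
-/

variable {V C : Type*}

/-!
The reflexive closure of `R` is transitive on each `R(x)`; applied inside `R(a)` this makes the
line `ℓ(a,b)` an `R`-clique, and any `R`-clique through `a` and `b` lies in `ℓ(a,b)` by
definition. Applied inside `R(x)`, it shows that two `R`-cliques sharing two points `x ≠ y` have
an `R`-clique as their union, so two lines sharing two points contain each other. Finally the
infinite set `R(a)` is covered by finitely many lines through `a`, one of which is therefore
infinite, and homogeneity moves any line through `a` onto it.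
-/

section Lines

variable {c : V → V → Fin 3}

def CRTransOnNbhd (c : V → V → Fin 3) : Prop :=
  ∀ a : V, ∀ x ∈ CNbhd c 0 a, ∀ y ∈ CNbhd c 0 a, ∀ z ∈ CNbhd c 0 a,
    (x = y ∨ c x y = 0) → (y = z ∨ c y z = 0) → (x = z ∨ c x z = 0)

lemma left_mem_cLine (a b : V) : a ∈ CLine c a b :=
  Set.mem_insert a _

lemma right_mem_cLine {a b : V} (hab : a ≠ b) (hcab : c a b = 0) : b ∈ CLine c a b :=
  Or.inr ⟨⟨hab.symm, hcab⟩, Or.inl rfl⟩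

lemma cClique_cLine (hsymm : CSymm c) (htr : CRTransOnNbhd c) {a b : V} (hab : a ≠ b)
    (hcab : c a b = 0) : CClique c 0 (CLine c a b) := by
  rintro x (rfl | ⟨hxa, hxb⟩) y (rfl | ⟨hya, hyb⟩) hxy
  · exact absurd rfl hxy
  · exact hya.2
  · exact (hsymm _ _).trans hxa.2
  · have hby : b = y ∨ c b y = 0 := hyb.imp Eq.symm ((hsymm _ _).trans)
    exact (htr a x hxa b ⟨hab.symm, hcab⟩ y hya hxb hby).resolve_left hxy

lemma subset_cLine_of_cClique (hsymm : CSymm c) {a b : V} {X : Set V} (hX : CClique c 0 X)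
    (ha : a ∈ X) (hb : b ∈ X) : X ⊆ CLine c a b := by
  intro x hx
  by_cases hxa : x = a
  · exact Or.inl hxa
  · refine Or.inr ⟨⟨hxa, (hsymm _ _).trans (hX x hx a ha hxa)⟩, ?_⟩
    by_cases hxb : x = b
    · exact Or.inl hxb
    · exact Or.inr (hX x hx b hb hxb)

lemma cClique_union_of_two_common (hsymm : CSymm c) (htr : CRTransOnNbhd c) {X Y : Set V}
    (hX : CClique c 0 X) (hY : CClique c 0 Y) {x y : V} (hxy : x ≠ y)
    (hxX : x ∈ X) (hyX : y ∈ X) (hxY : x ∈ Y) (hyY : y ∈ Y) :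
    CClique c 0 (X ∪ Y) := by
  have hnbhd : ∀ {u : V} {U : Set V}, CClique c 0 U → u ∈ U → x ∈ U → u ≠ x →
      u ∈ CNbhd c 0 x :=
    fun hU hu hx hux => ⟨hux, (hsymm _ _).trans (hU _ hu x hx hux)⟩
  have cross : ∀ z ∈ X, ∀ w ∈ Y, z ≠ w → c z w = 0 := by
    intro z hz w hw hzw
    by_cases hzx : z = x
    · subst hzx; exact hY z hxY w hw hzw
    by_cases hzy : z = y
    · subst hzy; exact hY z hyY w hw hzw
    by_cases hwx : w = x
    · subst hwx; exact hX z hz w hxX hzw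
    by_cases hwy : w = y
    · subst hwy; exact hX z hz w hyX hzw
    exact (htr x z (hnbhd hX hz hxX hzx) y ⟨hxy.symm, hX x hxX y hyX hxy⟩ w
      (hnbhd hY hw hxY hwx) (Or.inr (hX z hz y hyX hzy))
      (Or.inr ((hsymm _ _).trans (hY w hw y hyY hwy)))).resolve_left hzw
  rintro u (hu | hu) v (hv | hv) huv
  · exact hX u hu v hv huv
  · exact cross u hu v hv huv
  · exact (hsymm _ _).trans (cross v hv u hu huv.symm)
  · exact hY u hu v hv huv

lemma cLine_eq_of_two_common (hsymm : CSymm c) (htr : CRTransOnNbhd c) {a b a' b' : V}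
    (hab : a ≠ b) (hcab : c a b = 0) (hab' : a' ≠ b') (hcab' : c a' b' = 0) {x y : V}
    (hxy : x ≠ y) (hx : x ∈ CLine c a b) (hy : y ∈ CLine c a b)
    (hx' : x ∈ CLine c a' b') (hy' : y ∈ CLine c a' b') :
    CLine c a b = CLine c a' b' := by
  have hunion := cClique_union_of_two_common hsymm htr (cClique_cLine hsymm htr hab hcab)
    (cClique_cLine hsymm htr hab' hcab') hxy hx hy hx' hy'
  have h₁ : CLine c a b ∪ CLine c a' b' ⊆ CLine c a' b' :=
    subset_cLine_of_cClique hsymm hunion (Or.inr (left_mem_cLine a' b'))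
      (Or.inr (right_mem_cLine hab' hcab'))
  have h₂ : CLine c a b ∪ CLine c a' b' ⊆ CLine c a b :=
    subset_cLine_of_cClique hsymm hunion (Or.inl (left_mem_cLine a b))
      (Or.inl (right_mem_cLine hab hcab))
  exact (Set.subset_union_left.trans h₁).antisymm (Set.subset_union_right.trans h₂)

lemma CAuto.apply_mem_cLine_iff {σ : Equiv.Perm V} (hσ : CAuto c σ) {a b x : V} :
    σ x ∈ CLine c (σ a) (σ b) ↔ x ∈ CLine c a b := by
  simp only [CLine, Set.mem_insert_iff, Set.mem_ofPred_eq, σ.injective.eq_iff]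
  by_cases hxa : x = a
  · simp [hxa]
  by_cases hxb : x = b
  · simp [hxb, hσ a b (Ne.symm (hxb ▸ hxa))]
  simp [hxa, hxb, hσ a x (Ne.symm hxa), hσ x b hxb]

lemma CAuto.image_cLine {σ : Equiv.Perm V} (hσ : CAuto c σ) (a b : V) :
    σ '' CLine c a b = CLine c (σ a) (σ b) := by
  ext y
  obtain ⟨x, rfl⟩ := σ.surjective y
  rw [σ.injective.mem_set_image, hσ.apply_mem_cLine_iff]

lemma exists_infinite_cLine {a : V} (hinf : (CNbhd c 0 a).Infinite)
    (hfc : ∃ F : Finset V, (↑F : Set V) ⊆ CNbhd c 0 a ∧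
      ∀ x ∈ CNbhd c 0 a, ∃ v ∈ F, x = v ∨ c x v = 0) :
    ∃ v ∈ CNbhd c 0 a, (CLine c a v).Infinite := by
  obtain ⟨F, hFsub, hFcov⟩ := hfc
  by_contra! hfin
  refine hinf ((F.finite_toSet.biUnion fun v hv => hfin v (hFsub hv)).subset ?_)
  intro x hx
  obtain ⟨v, hvF, hxv⟩ := hFcov x hx
  exact Set.mem_biUnion hvF (Or.inr ⟨hx, hxv⟩)

lemma CHom.exists_cAuto_map_pair (hhom : CHom c) (hsymm : CSymm c) {x y x' y' : V}
    (hxy : x ≠ y) (hxy' : x' ≠ y') (hc : c x' y' = c x y) :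
    ∃ σ : Equiv.Perm V, CAuto c σ ∧ σ x = x' ∧ σ y = y' := by
  classical
  set f : V → V := Function.update (fun _ => x') y y'
  have hfx : f x = x' := Function.update_of_ne hxy _ _
  have hfy : f y = y' := Function.update_self _ _ _
  obtain ⟨σ, hσ, hσf⟩ := hhom {x, y} f
    (by
      intro u hu v hv
      simp only [Finset.coe_insert, Finset.coe_singleton, Set.mem_insert_iff,
        Set.mem_singleton_iff] at hu hv
      rcases hu with rfl | rfl <;> rcases hv with rfl | rfl <;> simp [hfx, hfy, hxy', hxy'.symm])
    (by
      intro u hu v hv huv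
      simp only [Finset.mem_insert, Finset.mem_singleton] at hu hv
      rcases hu with rfl | rfl <;> rcases hv with rfl | rfl
      · exact absurd rfl huv
      · rw [hfx, hfy, hc]
      · rw [hfx, hfy, hsymm, hc, hsymm]
      · exact absurd rfl huv)
  exact ⟨σ, hσ, (hσf x (by simp)).trans hfx, (hσf y (by simp)).trans hfy⟩

end Lines

theorem stmt13_general {V : Type*} (c : V → V → Fin 3)
    (hsymm : CSymm c)
    (hinf : ∀ a : V, (CNbhd c 0 a).Infinite)
    (heqv : ∀ a : V, ∀ x ∈ CNbhd c 0 a, ∀ y ∈ CNbhd c 0 a, ∀ z ∈ CNbhd c 0 a,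
      (x = y ∨ c x y = 0) → (y = z ∨ c y z = 0) → (x = z ∨ c x z = 0))
    (hfc : ∀ a : V, ∃ F : Finset V, (↑F : Set V) ⊆ CNbhd c 0 a ∧
      ∀ x ∈ CNbhd c 0 a, ∃ v ∈ F, x = v ∨ c x v = 0) :
    ∀ a b : V, a ≠ b → c a b = 0 →
      (CClique c 0 (CLine c a b) ∧ a ∈ CLine c a b ∧ b ∈ CLine c a b ∧
        ∀ X : Set V, CClique c 0 X → a ∈ X → b ∈ X → X ⊆ CLine c a b) ∧
      (∀ a' b' : V, a' ≠ b' → c a' b' = 0 → ∀ x y : V, x ≠ y →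
        x ∈ CLine c a b → y ∈ CLine c a b →
        x ∈ CLine c a' b' → y ∈ CLine c a' b' →
        CLine c a b = CLine c a' b') ∧
      (CHom c → (CLine c a b).Infinite) := by
  intro a b hab hcab
  refine ⟨⟨cClique_cLine hsymm heqv hab hcab, left_mem_cLine a b, right_mem_cLine hab hcab,
    fun X hX ha hb => subset_cLine_of_cClique hsymm hX ha hb⟩,
    fun a' b' hab' hcab' x y hxy => cLine_eq_of_two_common hsymm heqv hab hcab hab' hcab' hxy,
    fun hhom => ?_⟩
  obtain ⟨v, ⟨hva, hcav⟩, hv⟩ := exists_infinite_cLine (hinf a) (hfc a)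
  obtain ⟨σ, hσ, hσa, hσb⟩ :=
    hhom.exists_cAuto_map_pair hsymm hab hva.symm (hcav.trans hcab.symm)
  rw [← hσa, ← hσb, ← hσ.image_cLine] at hv
  exact hv.of_image σ

/-- in an infinite transitive 3-graph in which every `R(a)` is
infinite and carries the reflexive closure of `R` as an equivalence relation
with finitely many classes, the lines `ℓ(a,b)` are the unique maximal
`R`-cliques through their `R`-edges, any two distinct points lie on at most
one line, and (under homogeneity) every line is infinite; hence `(M, 𝓛)` is a
semilinear space. -/
theorem stmt13 {V : Type*} [Infinite V] (c : V → V → Fin 3)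
    (hsymm : CSymm c) (hall : CAll c) (htrans : CTrans c)
    (hinf : ∀ a : V, (CNbhd c 0 a).Infinite)
    (heqv : ∀ a : V, ∀ x ∈ CNbhd c 0 a, ∀ y ∈ CNbhd c 0 a, ∀ z ∈ CNbhd c 0 a,
      (x = y ∨ c x y = 0) → (y = z ∨ c y z = 0) → (x = z ∨ c x z = 0))
    (hfc : ∀ a : V, ∃ F : Finset V, (↑F : Set V) ⊆ CNbhd c 0 a ∧
      ∀ x ∈ CNbhd c 0 a, ∃ v ∈ F, x = v ∨ c x v = 0) :
    ∀ a b : V, a ≠ b → c a b = 0 →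
      (CClique c 0 (CLine c a b) ∧ a ∈ CLine c a b ∧ b ∈ CLine c a b ∧
        ∀ X : Set V, CClique c 0 X → a ∈ X → b ∈ X → X ⊆ CLine c a b) ∧
      (∀ a' b' : V, a' ≠ b' → c a' b' = 0 → ∀ x y : V, x ≠ y →
        x ∈ CLine c a b → y ∈ CLine c a b →
        x ∈ CLine c a' b' → y ∈ CLine c a' b' →
        CLine c a b = CLine c a' b') ∧
      (CHom c → (CLine c a b).Infinite) :=
  stmt13_general c hsymm hinf heqv hfc
end

section
/- Let M be a semilinear 3-graph, let a ∈ M, let d be a vertex at R-distance 2 from a, and let ℓ be a line through a. Then |R(d) ∩ ℓ| ≤ 1: the R-neighbourhood of d meets each line through a in at most one point. -/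
/-!
Common definitions for edge-coloured graphs ("n-graphs").
`V` is the vertex set and `C` the set of colours; `c x y` is the colour of the
pair `{x, y}` (only meaningful for `x ≠ y`).
-/

variable {V C : Type*}

/-- in a semilinear 3-graph, the `R`-neighbourhood of a vertex
`d` at `R`-distance 2 from `a` meets each line through `a` in at most one
point. -/
theorem stmt14 {V : Type*} (c : V → V → Fin 3)
    (hsymm : CSymm c) (hall : CAll c)
    (hsl : CSemilinear c)
    (a d : V) (hdist : CRDist2 c a d)
    (b : V) (hb : b ∈ CNbhd c 0 a) :
    Set.Subsingleton (CNbhd c 0 d ∩ CLine c a b) := by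
  obtain ⟨had, hcad, -⟩ := hdist
  obtain ⟨hba, hcab⟩ := hb
  obtain ⟨-, -, htrans, -⟩ := hsl
  intro x hx y hy
  obtain ⟨⟨hxd, hdx⟩, hxl⟩ := hx
  obtain ⟨⟨hyd, hdy⟩, hyl⟩ := hy
  -- x and y cannot be a
  rcases hxl with hxa' | ⟨⟨hxa, hax⟩, hxb⟩
  · exact absurd ((hsymm a d).trans (hxa' ▸ hdx)) hcad
  rcases hyl with hya' | ⟨⟨hya, hay⟩, hyb⟩
  · exact absurd ((hsymm a d).trans (hya' ▸ hdy)) hcad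
  by_contra hxy
  -- x ~ y in R(a)
  have hbmem : b ∈ CNbhd c 0 a := ⟨hba, hcab⟩
  have hby : b = y ∨ c b y = 0 := by
    rcases hyb with rfl | h
    · exact Or.inl rfl
    · exact Or.inr ((hsymm b y).symm ▸ (hsymm y b ▸ h))
  have hxy0 : x = y ∨ c x y = 0 :=
    htrans a x ⟨hxa, hax⟩ b hbmem y ⟨hya, hay⟩ hxb hby
  have hcxy : c x y = 0 := hxy0.resolve_left hxy
  -- a, y, d ∈ R(x)
  have hamem : a ∈ CNbhd c 0 x := ⟨fun h => hxa h.symm, (hsymm x a).trans hax⟩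
  have hymem : y ∈ CNbhd c 0 x := ⟨fun h => hxy h.symm, hcxy⟩
  have hdmem : d ∈ CNbhd c 0 x := ⟨fun h => hxd h.symm, (hsymm x d).trans hdx⟩
  have : a = d ∨ c a d = 0 :=
    htrans x a hamem y hymem d hdmem (Or.inr hay) (Or.inr ((hsymm y d).trans hdy))
  rcases this with h | h
  · exact had h
  · exact hcad h
end

section
/- Let M be a primitive homogeneous semilinear 3-graph of R-diameter 3 in which each point is incident with m lines. Then no vertex b at R-distance 2 from a vertex a is collinear with elements of R(a) on all m lines through a: the set R(b) ∩ R(a) fails to meet at least one of the m R-classes of R(a); in particular |R(b) ∩ R(a)| < m. -/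
/-!
Common definitions for edge-coloured graphs ("n-graphs").
`V` is the vertex set and `C` the set of colours; `c x y` is the colour of the
pair `{x, y}` (only meaningful for `x ≠ y`).
-/

variable {V C : Type*}

/-- in a primitive homogeneous semilinear 3-graph of
`R`-diameter 3 with `m` lines through each point, the `R`-neighbourhood of a
vertex at `R`-distance 2 from `a` misses at least one `R`-class of `R(a)`;
in particular `|R(b) ∩ R(a)| < m`. -/
theorem stmt16 {V : Type*} (c : V → V → Fin 3)
    (hsymm : CSymm c) (hall : CAll c)
    (hprim : CPrim c) (hhom : CHom c)
    (hsl : CSemilinear c) (hdiam : CDiamR3 c)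
    (m : ℕ) (hm : CNumLines c m) :
    ∀ a b : V, CRDist2 c a b →
      (∃ v ∈ CNbhd c 0 a, ∀ w ∈ CNbhd c 0 a,
        (w = v ∨ c w v = 0) → w ∉ CNbhd c 0 b) ∧
      (CNbhd c 0 a ∩ CNbhd c 0 b).Finite ∧
      (CNbhd c 0 a ∩ CNbhd c 0 b).ncard < m := by
  classical
  intro a b hab
  obtain ⟨hne, hnR, u0, hu1, hu2, hu3, hu4⟩ := hab
  have hcab : c a b = 1 := (hdiam a b hne).1.mpr ⟨hne, hnR, u0, hu1, hu2, hu3, hu4⟩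
  -- a distance-3 pair
  obtain ⟨a', d', had, hcT⟩ := hall 2
  obtain ⟨had', hTnR, hno, z, w, hz1, hz2, hw1, hw2, hzw, hcz, hczw, hcwd⟩ :=
    (hdiam a' d' had).2.mp hcT
  have hczd0 : c z d' ≠ 0 := fun h => hno ⟨z, hz1, hz2, hcz, h⟩
  have hczd : c z d' = 1 :=
    (hdiam z d' hz2).1.mpr ⟨hz2, hczd0, w, hzw.symm, hw2, hczw, hcwd⟩
  -- Part 1: some R-class of R(a) is missed by R(b)
  have part1 : ∃ v ∈ CNbhd c 0 a, ∀ w ∈ CNbhd c 0 a,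
      (w = v ∨ c w v = 0) → w ∉ CNbhd c 0 b := by
    by_contra hcon
    push_neg at hcon
    have hzd' : z ≠ d' := hz2
    have hinj : Set.InjOn (fun x => if x = a then z else d')
        (↑({a, b} : Finset V) : Set V) := by
      intro x hx y hy hxy
      simp only [Finset.coe_insert, Finset.coe_singleton, Set.mem_insert_iff,
        Set.mem_singleton_iff] at hx hy
      rcases hx with rfl | rfl <;> rcases hy with rfl | rfl <;>
        simp_all [hne, hne.symm, hzd', hzd'.symm]
    have hcol : ∀ x ∈ ({a, b} : Finset V), ∀ y ∈ ({a, b} : Finset V), x ≠ y →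
        c ((fun x => if x = a then z else d') x)
          ((fun x => if x = a then z else d') y) = c x y := by
      intro x hx y hy hxy
      simp only [Finset.mem_insert, Finset.mem_singleton] at hx hy
      rcases hx with h | h <;> rcases hy with h' | h' <;> rw [h, h']
      · exact absurd (h.trans h'.symm) hxy
      · simpa [hne.symm] using hczd.trans hcab.symm
      · have hdz : c d' z = c b a := by
          rw [hsymm d' z, hsymm b a]; exact hczd.trans hcab.symm
        simpa [hne.symm] using hdz
      · exact absurd (h.trans h'.symm) hxy
    obtain ⟨σ, hσ, hσa⟩ := hhom {a, b} (fun x => if x = a then z else d') hinj hcol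
    have hsa : σ a = z := by simpa using hσa a (by simp)
    have hsb : σ b = d' := by simpa [hne.symm] using hσa b (by simp)
    set v := σ.symm a' with hvdef
    have hσv : σ v = a' := σ.apply_symm_apply a'
    have hva : v ≠ a := by
      intro h
      exact hz1 (by rw [← hsa, ← h, hσv])
    have hcav : c a v = 0 := by
      have := hσ a v (Ne.symm hva)
      rw [hsa, hσv] at this
      rw [← this, hsymm z a']
      exact hcz
    obtain ⟨w₀, hw₀a, hw₀cl, hw₀b⟩ := hcon v ⟨hva, hcav⟩
    have hw₀b' : w₀ ≠ b ∧ c b w₀ = 0 := hw₀b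
    have hw₀a' : w₀ ≠ a ∧ c a w₀ = 0 := hw₀a
    have hcdw : c d' (σ w₀) = 0 := by
      have := hσ b w₀ (Ne.symm hw₀b'.1)
      rw [hsb] at this
      rw [this]; exact hw₀b'.2
    have hwa' : σ w₀ ≠ a' := by
      intro h
      have : c d' a' = 0 := h ▸ hcdw
      rw [← hsymm a' d', hcT] at this
      exact absurd this (by decide)
    have hw₀v : w₀ ≠ v := by
      intro h
      exact hwa' (by rw [h, hσv])
    have hcwa' : c (σ w₀) a' = 0 := by
      rcases hw₀cl with h | h
      · exact absurd h hw₀v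
      · have := hσ w₀ v hw₀v
        rw [hσv] at this
        rw [this]; exact h
    have hwd' : σ w₀ ≠ d' := by
      intro h
      have : c d' d' = 0 := h ▸ hcdw
      have h2 : c (σ w₀) a' ≠ 0 := by
        rw [h, hsymm d' a', hcT]; decide
      exact h2 hcwa'
    exact hno ⟨σ w₀, hwa', hwd', (hsymm a' (σ w₀)) ▸ hcwa', (hsymm (σ w₀) d') ▸ hcdw⟩
  -- Parts 2 and 3
  obtain ⟨F, hFcard, hFsub, hFpair, hFrep⟩ := hm a
  have htrans := hsl.2.2.1
  -- no two distinct points of the intersection are R-related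
  have lemA : ∀ x ∈ CNbhd c 0 a ∩ CNbhd c 0 b, ∀ y ∈ CNbhd c 0 a ∩ CNbhd c 0 b,
      x ≠ y → c x y ≠ 0 := by
    intro x hx y hy hxy hcxy
    have hxa : x ≠ a ∧ c a x = 0 := hx.1
    have hxb : x ≠ b ∧ c b x = 0 := hx.2
    have hya : y ≠ a ∧ c a y = 0 := hy.1
    have hyb : y ≠ b ∧ c b y = 0 := hy.2
    have h := htrans x a ⟨fun h => hxa.1 h.symm, (hsymm x a) ▸ hxa.2⟩
      y ⟨hxy.symm, hcxy⟩ b ⟨fun h => hxb.1 h.symm, (hsymm x b) ▸ hxb.2⟩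
      (Or.inr hya.2) (Or.inr ((hsymm y b) ▸ hyb.2))
    rcases h with h | h
    · exact hne h
    · exact hnR h
  -- representative function
  set g : V → V := fun x => if h : ∃ v ∈ F, x = v ∨ c x v = 0 then h.choose else x
    with hgdef
  have hg : ∀ x ∈ CNbhd c 0 a, g x ∈ F ∧ (x = g x ∨ c x (g x) = 0) := by
    intro x hx
    have h := hFrep x hx
    simp only [hgdef, dif_pos h]
    exact ⟨h.choose_spec.1, h.choose_spec.2⟩
  -- within R(a), ~ is transitive and symmetric (helpers)
  have hsym2 : ∀ x y : V, (x = y ∨ c x y = 0) → (y = x ∨ c y x = 0) := by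
    intro x y h
    exact h.imp Eq.symm (fun h' => (hsymm y x).trans h')
  have hinjg : Set.InjOn g (CNbhd c 0 a ∩ CNbhd c 0 b) := by
    intro x hx y hy hxy
    by_contra hxyne
    obtain ⟨hgx, hcx⟩ := hg x hx.1
    obtain ⟨hgy, hcy⟩ := hg y hy.1
    have hgxa : g x ∈ CNbhd c 0 a := hFsub hgx
    have h2 : g x = y ∨ c (g x) y = 0 := by
      rw [hxy]
      exact hsym2 y (g y) hcy
    have h := htrans a x hx.1 (g x) hgxa y hy.1 hcx h2
    rcases h with h | h
    · exact hxyne h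
    · exact lemA x hx y hy hxyne h
  have hfin : (CNbhd c 0 a ∩ CNbhd c 0 b).Finite := by
    apply Set.Finite.of_finite_image _ hinjg
    exact F.finite_toSet.subset (by
      rintro _ ⟨x, hx, rfl⟩
      exact (hg x hx.1).1)
  refine ⟨part1, hfin, ?_⟩
  obtain ⟨v, hv, hvmiss⟩ := part1
  obtain ⟨hgv, hcv⟩ := hg v hv
  have hgnotu : ∀ x ∈ CNbhd c 0 a ∩ CNbhd c 0 b, g x ≠ g v := by
    intro x hx hgx
    obtain ⟨hgx1, hgx2⟩ := hg x hx.1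
    have hgxa : g x ∈ CNbhd c 0 a := hFsub hgx1
    have h2 : g x = v ∨ c (g x) v = 0 := by
      rw [hgx]
      exact hsym2 v (g v) hcv
    have h := htrans a x hx.1 (g x) hgxa v hv hgx2 h2
    exact hvmiss x hx.1 h hx.2
  have hsub : ∀ x ∈ CNbhd c 0 a ∩ CNbhd c 0 b,
      g x ∈ (↑(F.erase (g v)) : Set V) := by
    intro x hx
    simp only [Finset.coe_erase, Set.mem_diff, Set.mem_singleton_iff]
    exact ⟨(hg x hx.1).1, hgnotu x hx⟩
  have hle := Set.ncard_le_ncard_of_injOn g hsub hinjg (F.erase (g v)).finite_toSet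
  rw [Set.ncard_coe_finset, Finset.card_erase_of_mem hgv, hFcard] at hle
  have hmpos : 0 < m := hFcard ▸ Finset.card_pos.mpr ⟨g v, hgv⟩
  omega
end
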